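/- arXiv:1308.0324 — 5 statements merged into one kernel-verified Lean document; each statement's English description precedes it below -/
import Mathlib

section
/- Let t ≥ 2 and n ≥ t + 4. For every i with 2 ≤ i ≤ n − t − 3: if ν_i(n,t) < ν_{i+1}(n,t), then ν_{i+1}(n,t) < ν_{i+2}(n,t). Consequently, max{ν_i(n,t) : 2 ≤ i ≤ n − t − 1} = max{ν_2(n,t), ν_{n−t−1}(n,t)}. -/
open Finset

abbrev SetPartition (n : ℕ) := Finpartition (Finset.univ : Finset (Fin n))

def IsTIntersecting (n t : ℕ) (A : Set (SetPartition n)) : Prop :=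
  ∀ p ∈ A, ∀ q ∈ A, t ≤ (p.parts ∩ q.parts).card

noncomputable def M (n t : ℕ) : ℕ :=
  sSup {m : ℕ | ∃ A : Set (SetPartition n), IsTIntersecting n t A ∧ A.ncard = m}

def IsNontrivTIntersecting (n t : ℕ) (A : Set (SetPartition n)) : Prop :=
  IsTIntersecting n t A ∧ {b : Finset (Fin n) | ∀ p ∈ A, b ∈ p.parts}.ncard < t

noncomputable def Mtilde (n t : ℕ) : ℕ :=
  sSup {m : ℕ | ∃ A : Set (SetPartition n), IsNontrivTIntersecting n t A ∧ A.ncard = m}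

def fixedSet {n : ℕ} (p : SetPartition n) : Finset (Fin n) :=
  Finset.univ.filter (fun i => ({i} : Finset (Fin n)) ∈ p.parts)

noncomputable def Btilde (m : ℕ) : ℕ :=
  Nat.card {p : SetPartition m // ∀ b ∈ p.parts, b.card ≠ 1}

noncomputable def Bell (m : ℕ) : ℕ := Nat.card (SetPartition m)

noncomputable def gammaQ (n t l : ℕ) : ℚ :=
  ((∑ i ∈ Finset.range (n - l + 2), (n - l + 1).choose i * Btilde (n - (l + t) / 2 + 1 - i) : ℕ) : ℚ) /
  ((∑ i ∈ Finset.range (n - l + 1), (n - l).choose i * Btilde (n - (l + t) / 2 - i) : ℕ) : ℚ)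

noncomputable def maxCond (n t l : ℕ) : Prop :=
  ((l - t : ℕ) : ℚ) / (2 * ((l - 1 : ℕ) : ℚ)) * gammaQ n t l ≤ 1

def blockOf {n : ℕ} (p : SetPartition n) (i : Fin n) : Finset (Fin n) :=
  (p.parts.filter (fun b => i ∈ b)).sup id

def fixParts {n : ℕ} (i j : Fin n) (p : SetPartition n) : Finset (Finset (Fin n)) :=
  if i ≠ j ∧ j ∈ blockOf p i then
    (p.parts \ {blockOf p i}) ∪ {({i} : Finset (Fin n)), blockOf p i \ {i}}
  else p.parts

def shiftParts {n : ℕ} (v w : Fin n) (p : SetPartition n) : Finset (Finset (Fin n)) :=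
  if ({w} : Finset (Fin n)) ∈ p.parts ∧ ({v} : Finset (Fin n)) ∉ p.parts then
    (p.parts \ {blockOf p v, ({w} : Finset (Fin n))}) ∪
      {insert w (blockOf p v \ {v}), ({v} : Finset (Fin n))}
  else p.parts

def FixClosed {n : ℕ} (A : Set (SetPartition n)) : Prop :=
  ∀ p ∈ A, ∀ i j : Fin n, i ≠ j → ∀ q : SetPartition n, q.parts = fixParts i j p → q ∈ A

def ShiftClosed {n : ℕ} (A : Set (SetPartition n)) : Prop :=
  ∀ p ∈ A, ∀ v w : Fin n, v < w → ∀ q : SetPartition n, q.parts = shiftParts v w p → q ∈ A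

def DClosedOn {n : ℕ} (A : Set (SetPartition n)) (S : Set (Fin n)) : Prop :=
  ∀ p ∈ A, ∀ v ∈ S, ∀ w ∈ S, v ≠ w → ∀ q : SetPartition n, q.parts = shiftParts v w p → q ∈ A

def Hfam (n t i : ℕ) : Finset (Finset (Fin n)) :=
  Finset.univ.filter (fun H : Finset (Fin n) =>
    (H ⊆ Finset.univ.filter (fun x : Fin n => x.val < t + i) ∧ H.card = t + 1 ∧
      Finset.univ.filter (fun x : Fin n => x.val < t) ⊆ H) ∨
    (H ⊆ Finset.univ.filter (fun x : Fin n => x.val < t + i) ∧ H.card = t + i - 1 ∧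
      Finset.univ.filter (fun x : Fin n => t ≤ x.val ∧ x.val < t + i) ⊆ H))

def upset (n : ℕ) (C : Finset (Finset (Fin n))) : Finset (Finset (Fin n)) :=
  Finset.univ.filter (fun S => ∃ c ∈ C, c ⊆ S)

noncomputable def nu (n t i : ℕ) : ℕ :=
  ∑ S ∈ upset n (Hfam n t i), Btilde (n - S.card)

def minFixedSets {n : ℕ} (A : Set (SetPartition n)) : Set (Finset (Fin n)) :=
  {E | (∃ p ∈ A, fixedSet p = E) ∧ ∀ p ∈ A, fixedSet p ⊆ E → fixedSet p = E}

noncomputable def splus {n : ℕ} (A : Set (SetPartition n)) : ℕ :=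
  sSup {m : ℕ | ∃ E ∈ minFixedSets A, m = E.sup (fun x => x.val + 1)}

/-!
Write `e = t + i` (elements are `0`-indexed). Passing from `W(H_i)` to `W(H_{i+1})` gains exactly
the sets that contain `[t]` and `e` but nothing in between, and loses exactly the sets that miss
`e` and one element of `[t]` but contain the rest of `[t + i]`. Summing over the free elements
above `e` gives `ν_{i+1} - ν_i = Φ(i, m) - t Φ(2, m)` with `m = n - t - i - 1` and
`Φ(s, m) = ∑_j (m choose j) B̃(s + j)`. Pascal's rule `Φ(s, m + 1) = Φ(s, m) + Φ(s + 1, m)`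
and the monotonicity of `B̃` on positive arguments (pull partitions back along a surjection
`[m + 1] → [m]`) then show that a strict increase `ν_i < ν_{i+1}` persists, so the maximum of
`ν` over an interval is attained at an endpoint.
-/

section IncreasePersists

variable {α : Type*} [LinearOrder α] {f : ℕ → α} {a b : ℕ}

theorem le_max_of_lt_succ_imp_lt_succ
    (hf : ∀ i, a ≤ i → i + 2 ≤ b → f i < f (i + 1) → f (i + 1) < f (i + 2))
    {i : ℕ} (hai : a ≤ i) (hib : i ≤ b) : f i ≤ max (f a) (f b) := by
  by_cases hrise : ∃ j, a ≤ j ∧ j < i ∧ f j < f (j + 1)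
  · obtain ⟨j, haj, hji, hj⟩ := hrise
    have hinc : ∀ k, j ≤ k → k < b → f k < f (k + 1) := by
      intro k hjk
      induction k, hjk using Nat.le_induction with
      | base => exact fun _ => hj
      | succ k hjk ih => exact fun hkb => hf k (by omega) (by omega) (ih (by omega))
    have hmono : MonotoneOn f (Set.Icc j b) :=
      monotoneOn_of_le_succ Set.ordConnected_Icc fun k _ hk hk' => (hinc k hk.1 hk'.2).le
    exact le_max_of_le_right (hmono ⟨hji.le, hib⟩ ⟨hji.le.trans hib, le_rfl⟩ hib)
  · push Not at hrise
    have hanti : AntitoneOn f (Set.Icc a i) :=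
      antitoneOn_of_succ_le Set.ordConnected_Icc fun k _ hk hk' => hrise k hk.1 hk'.2
    exact le_max_of_le_left (hanti ⟨le_rfl, hai⟩ ⟨hai, le_rfl⟩ hai)

theorem sup_Icc_eq_max_of_lt_succ_imp_lt_succ [OrderBot α]
    (hf : ∀ i, a ≤ i → i + 2 ≤ b → f i < f (i + 1) → f (i + 1) < f (i + 2))
    (hab : a ≤ b) : (Icc a b).sup f = max (f a) (f b) :=
  le_antisymm (Finset.sup_le fun _ hi => le_max_of_lt_succ_imp_lt_succ hf (mem_Icc.1 hi).1
      (mem_Icc.1 hi).2)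
    (max_le (le_sup (mem_Icc.2 ⟨le_rfl, hab⟩)) (le_sup (mem_Icc.2 ⟨hab, le_rfl⟩)))

end IncreasePersists

namespace Finpartition

variable {α β : Type*} [Fintype α] [DecidableEq β] {f : α → β}

theorem image_filter_mem_of_surjective (hf : Function.Surjective f)
    (b : Finset β) : (univ.filter fun x => f x ∈ b).image f = b := by
  ext y
  obtain ⟨x, rfl⟩ := hf y
  simp only [mem_image, mem_filter, mem_univ, true_and]
  exact ⟨fun ⟨x', hx', hxx'⟩ => hxx' ▸ hx', fun hx => ⟨x, hx, rfl⟩⟩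

def comap [DecidableEq α] [Fintype β] (f : α → β) (hf : Function.Surjective f)
    (P : Finpartition (univ : Finset β)) : Finpartition (univ : Finset α) where
  parts := P.parts.image fun b => univ.filter fun x => f x ∈ b
  supIndep := by
    rw [supIndep_iff_pairwiseDisjoint]
    rintro _ hb' _ hc' hbc
    obtain ⟨b, hb, rfl⟩ := mem_image.1 hb'
    obtain ⟨c, hc, rfl⟩ := mem_image.1 hc'
    have hbc' : b ≠ c := fun h => hbc (h ▸ rfl)
    exact disjoint_filter.2 fun x _ hxb hxc =>
      disjoint_left.1 (P.disjoint hb hc hbc') hxb hxc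
  sup_parts := by
    refine eq_univ_of_forall fun x => ?_
    obtain ⟨b, hb, hxb⟩ := P.exists_mem (mem_univ (f x))
    exact mem_sup.2 ⟨_, mem_image_of_mem _ hb, by simpa using hxb⟩
  bot_notMem := by
    intro hbot
    obtain ⟨b, hb, hempty⟩ := mem_image.1 hbot
    obtain ⟨y, hy⟩ := P.nonempty_of_mem_parts hb
    obtain ⟨x, rfl⟩ := hf y
    exact eq_empty_iff_forall_notMem.1 hempty x (by simpa using hy)

variable [DecidableEq α] [Fintype β]

theorem image_image_comap_parts (hf : Function.Surjective f)
    (P : Finpartition (univ : Finset β)) :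
    (P.comap f hf).parts.image (image f) = P.parts := by
  simp only [comap, image_image]
  exact (image_congr fun b _ => image_filter_mem_of_surjective hf b).trans image_id

theorem comap_injective (hf : Function.Surjective f) : Function.Injective (comap f hf) :=
  fun P Q h => Finpartition.ext <| by
    rw [← image_image_comap_parts hf P, h, image_image_comap_parts]

theorem card_le_card_of_mem_comap_parts (hf : Function.Surjective f)
    {P : Finpartition (univ : Finset β)} {c : Finset α} (hc : c ∈ (P.comap f hf).parts) :
    ∃ b ∈ P.parts, #b ≤ #c := by
  obtain ⟨b, hb, rfl⟩ := mem_image.1 hc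
  refine ⟨b, hb, ?_⟩
  conv_lhs => rw [← image_filter_mem_of_surjective hf b]
  exact card_image_le

theorem card_noSingleton_le_of_surjective (hf : Function.Surjective f) :
    Nat.card {P : Finpartition (univ : Finset β) // ∀ b ∈ P.parts, #b ≠ 1} ≤
      Nat.card {Q : Finpartition (univ : Finset α) // ∀ c ∈ Q.parts, #c ≠ 1} := by
  refine Nat.card_le_card_of_injective (fun P => ⟨P.1.comap f hf, fun c hc => ?_⟩)
    fun P Q h => Subtype.ext (comap_injective hf (congrArg Subtype.val h))
  obtain ⟨b, hb, hbc⟩ := card_le_card_of_mem_comap_parts hf hc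
  have := (P.1.nonempty_of_mem_parts hb).card_pos
  have := P.2 b hb
  omega

end Finpartition

theorem Btilde_le_Btilde_succ {m : ℕ} (hm : m ≠ 0) : Btilde m ≤ Btilde (m + 1) :=
  Finpartition.card_noSingleton_le_of_surjective (Fin.predAbove_surjective ⟨0, by omega⟩)

noncomputable def Phi (s m : ℕ) : ℕ := ∑ j ∈ range (m + 1), m.choose j * Btilde (s + j)

theorem Phi_card_eq_sum_powerset {α : Type*} (s : ℕ) (R : Finset α) :
    Phi s #R = ∑ F ∈ R.powerset, Btilde (s + #F) := by
  rw [sum_powerset_apply_card (fun k => Btilde (s + k))]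
  simp only [Phi, smul_eq_mul]

theorem Phi_succ (s m : ℕ) : Phi s (m + 1) = Phi s m + Phi (s + 1) m := by
  have hm : m ∉ range m := notMem_range_self
  have hPhi (k : ℕ) (s' : ℕ) : Phi s' k = ∑ F ∈ (range k).powerset, Btilde (s' + #F) := by
    simpa using Phi_card_eq_sum_powerset s' (range k)
  rw [hPhi, hPhi, hPhi, range_add_one, sum_powerset_insert hm]
  congr 1
  refine sum_congr rfl fun F hF => ?_
  rw [card_insert_of_notMem fun h => hm (mem_powerset.1 hF h), add_right_comm, add_assoc]

theorem Phi_le_Phi_succ {s : ℕ} (hs : s ≠ 0) (m : ℕ) : Phi s m ≤ Phi (s + 1) m :=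
  sum_le_sum fun j _ => Nat.mul_le_mul_left _ <| by
    rw [add_right_comm]
    exact Btilde_le_Btilde_succ (by omega)

section UnionPowerset

variable {α : Type*} [DecidableEq α] {P R S : Finset α}

theorem mem_image_union_powerset_iff (h : Disjoint P R) :
    S ∈ R.powerset.image (P ∪ ·) ↔ ∀ x ∉ R, (x ∈ S ↔ x ∈ P) := by
  constructor
  · rintro hS x hx
    obtain ⟨F, hF, rfl⟩ := mem_image.1 hS
    have hxF : x ∉ F := fun hxF => hx (mem_powerset.1 hF hxF)
    simp [hxF]
  · intro hS
    refine mem_image.2 ⟨S ∩ R, mem_powerset.2 inter_subset_right, ext fun x => ?_⟩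
    by_cases hx : x ∈ R
    · simp [hx, disjoint_right.1 h hx]
    · simp [hx, hS x hx]

theorem sum_image_union_powerset_Btilde (h : Disjoint P R) {N s : ℕ} (hN : #P + #R + s = N) :
    ∑ S ∈ R.powerset.image (P ∪ ·), Btilde (N - #S) = Phi s #R := by
  have hdisj : ∀ F ∈ R.powerset, Disjoint P F := fun F hF => h.mono_right (mem_powerset.1 hF)
  rw [sum_image fun F hF G hG hFG => by
      rw [← union_sdiff_cancel_left (hdisj F hF), hFG, union_sdiff_cancel_left (hdisj G hG)],
    Phi_card_eq_sum_powerset]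
  refine sum_nbij' (R \ ·) (R \ ·) (fun _ _ => mem_powerset.2 sdiff_subset)
    (fun _ _ => mem_powerset.2 sdiff_subset)
    (fun F hF => Finset.sdiff_sdiff_eq_self (mem_powerset.1 hF))
    (fun F hF => Finset.sdiff_sdiff_eq_self (mem_powerset.1 hF)) fun F hF => ?_
  have hFR := card_le_card (mem_powerset.1 hF)
  rw [card_union_of_disjoint (hdisj F hF), card_sdiff_of_subset (mem_powerset.1 hF)]
  congr 1
  omega

end UnionPowerset

def lowSet (n a : ℕ) : Finset (Fin n) := univ.filter fun x => x.val < a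

section LowSet

variable {n a b : ℕ}

@[simp]
theorem mem_lowSet {x : Fin n} : x ∈ lowSet n a ↔ x.val < a := by
  simp [lowSet]

theorem card_lowSet (h : a ≤ n) : #(lowSet n a) = a := by
  simpa [lowSet, h] using Fin.card_filter_val_lt (n := n) (m := a)

theorem lowSet_subset_lowSet (h : a ≤ b) : lowSet n a ⊆ lowSet n b :=
  fun _ hx => mem_lowSet.2 ((mem_lowSet.1 hx).trans_le h)

end LowSet

section Upset

variable {n t i : ℕ}

theorem mem_Hfam (hn : t + i ≤ n) (hi : 0 < i) {H : Finset (Fin n)} :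
    H ∈ Hfam n t i ↔
      (∃ x : Fin n, t ≤ x.val ∧ x.val < t + i ∧ insert x (lowSet n t) = H) ∨
      ∃ u : Fin n, u.val < t ∧ (lowSet n (t + i)).erase u = H := by
  simp only [Hfam, mem_filter, mem_univ, true_and]
  change (H ⊆ lowSet n (t + i) ∧ #H = t + 1 ∧ lowSet n t ⊆ H) ∨
    (H ⊆ lowSet n (t + i) ∧ #H = t + i - 1 ∧
      (univ.filter fun x : Fin n => t ≤ x.val ∧ x.val < t + i) ⊆ H) ↔ _
  refine or_congr ⟨?_, ?_⟩ ⟨?_, ?_⟩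
  · rintro ⟨hHB, hcard, hAH⟩
    obtain ⟨x, hxA, rfl⟩ :=
      exists_eq_insert_iff.2 ⟨hAH, by rw [hcard, card_lowSet (by omega)]⟩
    exact ⟨x, by simpa using hxA, mem_lowSet.1 (hHB (mem_insert_self x _)), rfl⟩
  · rintro ⟨x, htx, hxi, rfl⟩
    refine ⟨insert_subset (mem_lowSet.2 hxi) (lowSet_subset_lowSet (by omega)), ?_,
      subset_insert _ _⟩
    rw [card_insert_of_notMem (by simpa using htx), card_lowSet (by omega)]
  · rintro ⟨hHB, hcard, hTH⟩
    obtain ⟨u, huH, hins⟩ :=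
      exists_eq_insert_iff.2 ⟨hHB, by rw [hcard, card_lowSet hn]; omega⟩
    have hui : u.val < t + i := mem_lowSet.1 (hins ▸ mem_insert_self u H)
    refine ⟨u, ?_, by rw [← hins, erase_insert huH]⟩
    by_contra! htu
    exact huH (hTH (by simp [htu, hui]))
  · rintro ⟨u, hut, rfl⟩
    refine ⟨erase_subset _ _, ?_, fun x hx => ?_⟩
    · rw [card_erase_of_mem (mem_lowSet.2 (by omega)), card_lowSet hn]
    · simp only [mem_filter, mem_univ, true_and] at hx
      exact mem_erase.2 ⟨fun hxu => by subst hxu; omega, mem_lowSet.2 hx.2⟩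

theorem mem_upset_Hfam (hn : t + i ≤ n) (hi : 0 < i) {S : Finset (Fin n)} :
    S ∈ upset n (Hfam n t i) ↔
      ((∀ y : Fin n, y.val < t → y ∈ S) ∧ ∃ x ∈ S, t ≤ x.val ∧ x.val < t + i) ∨
        ∃ u : Fin n, u.val < t ∧ ∀ y : Fin n, y.val < t + i → y ≠ u → y ∈ S := by
  simp only [upset, mem_filter, mem_univ, true_and, mem_Hfam hn hi]
  constructor
  · rintro ⟨H, ⟨x, htx, hxi, rfl⟩ | ⟨u, hut, rfl⟩, hHS⟩
    · rw [insert_subset_iff] at hHS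
      exact Or.inl ⟨fun y hy => hHS.2 (mem_lowSet.2 hy), x, hHS.1, htx, hxi⟩
    · exact Or.inr ⟨u, hut, fun y hy hyu => hHS (mem_erase.2 ⟨hyu, mem_lowSet.2 hy⟩)⟩
  · rintro (⟨hlow, x, hxS, htx, hxi⟩ | ⟨u, hut, hS⟩)
    · exact ⟨_, Or.inl ⟨x, htx, hxi, rfl⟩,
        insert_subset hxS fun y hy => hlow y (mem_lowSet.1 hy)⟩
    · exact ⟨_, Or.inr ⟨u, hut, rfl⟩,
        fun y hy => hS y (mem_lowSet.1 (mem_of_mem_erase hy)) (ne_of_mem_erase hy)⟩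

end Upset

section GainedLost

variable {n : ℕ} (t : ℕ) (e : Fin n)

def gainedSets : Finset (Finset (Fin n)) :=
  (lowSet n (e.val + 1))ᶜ.powerset.image (insert e (lowSet n t) ∪ ·)

def lostSets : Finset (Finset (Fin n)) :=
  (lowSet n t).biUnion fun u =>
    (lowSet n (e.val + 1))ᶜ.powerset.image ((lowSet n e.val).erase u ∪ ·)

theorem card_compl_lowSet_succ : #(lowSet n (e.val + 1))ᶜ = n - e.val - 1 := by
  rw [card_compl, Fintype.card_fin, card_lowSet e.isLt]
  omega

theorem disjoint_erase_lowSet_compl (u : Fin n) :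
    Disjoint ((lowSet n e.val).erase u) (lowSet n (e.val + 1))ᶜ :=
  disjoint_compl_right.mono_left <| (erase_subset _ _).trans (lowSet_subset_lowSet (by omega))

theorem mem_lostSets {S : Finset (Fin n)} :
    S ∈ lostSets t e ↔
      ∃ u : Fin n, u.val < t ∧
        ∀ x : Fin n, x.val ≤ e.val → (x ∈ S ↔ x ≠ u ∧ x.val < e.val) := by
  simp only [lostSets, mem_biUnion, mem_image_union_powerset_iff (disjoint_erase_lowSet_compl _ _),
    mem_compl, mem_lowSet, not_not, mem_erase, Nat.lt_add_one_iff]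

variable {t e} (hte : t ≤ e.val)
include hte

theorem disjoint_insert_lowSet_compl :
    Disjoint (insert e (lowSet n t)) (lowSet n (e.val + 1))ᶜ :=
  disjoint_compl_right.mono_left <|
    insert_subset (mem_lowSet.2 e.val.lt_add_one) (lowSet_subset_lowSet (by omega))

theorem mem_gainedSets {S : Finset (Fin n)} :
    S ∈ gainedSets t e ↔
      ∀ x : Fin n, x.val ≤ e.val → (x ∈ S ↔ x.val < t ∨ x = e) := by
  rw [gainedSets, mem_image_union_powerset_iff (disjoint_insert_lowSet_compl hte)]
  simp [or_comm]

theorem sum_gainedSets :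
    ∑ S ∈ gainedSets t e, Btilde (n - #S) = Phi (e.val - t) (n - e.val - 1) := by
  rw [← card_compl_lowSet_succ]
  refine sum_image_union_powerset_Btilde (disjoint_insert_lowSet_compl hte) ?_
  rw [card_insert_of_notMem (by simpa using hte), card_lowSet (by omega), card_compl_lowSet_succ]
  omega

theorem sum_lostSets : ∑ S ∈ lostSets t e, Btilde (n - #S) = t * Phi 2 (n - e.val - 1) := by
  have hpiece : ∀ u ∈ lowSet n t, ∑ S ∈ (lowSet n (e.val + 1))ᶜ.powerset.image
      ((lowSet n e.val).erase u ∪ ·), Btilde (n - #S) = Phi 2 (n - e.val - 1) := by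
    intro u hu
    rw [mem_lowSet] at hu
    rw [← card_compl_lowSet_succ]
    refine sum_image_union_powerset_Btilde (disjoint_erase_lowSet_compl _ _) ?_
    rw [card_erase_of_mem (mem_lowSet.2 (by omega)), card_lowSet e.isLt.le,
      card_compl_lowSet_succ]
    omega
  rw [lostSets, sum_biUnion, sum_congr rfl hpiece, sum_const, card_lowSet (by omega), smul_eq_mul]
  intro u hu v hv huv
  rw [Function.onFun, disjoint_left]
  intro S hSu hSv
  rw [mem_image_union_powerset_iff (disjoint_erase_lowSet_compl _ _)] at hSu hSv
  have hut : u.val < t := mem_lowSet.1 (mem_coe.1 hu)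
  have hue : u ∉ (lowSet n (e.val + 1))ᶜ := fun h => mem_compl.1 h (mem_lowSet.2 (by omega))
  have huS : u ∈ S := (hSv u hue).2 (mem_erase.2 ⟨huv, mem_lowSet.2 (by omega)⟩)
  exact notMem_erase u _ ((hSu u hue).1 huS)

end GainedLost

section Recurrence

variable {n t i : ℕ} {e : Fin n} (he : e.val = t + i) (hi : 0 < i)
include he hi

theorem lostSets_subset_upset_Hfam : lostSets t e ⊆ upset n (Hfam n t i) := by
  intro S hS
  obtain ⟨u, hut, hS⟩ := (mem_lostSets t e).1 hS
  rw [mem_upset_Hfam (by omega) hi]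
  exact Or.inr ⟨u, hut, fun y hy hyu => (hS y (by omega)).2 ⟨hyu, by omega⟩⟩

theorem disjoint_gainedSets_upset_Hfam : Disjoint (gainedSets t e) (upset n (Hfam n t i)) := by
  rw [disjoint_left]
  intro S hX hW
  rw [mem_gainedSets (by omega)] at hX
  rw [mem_upset_Hfam (by omega) hi] at hW
  rcases hW with ⟨-, x, hxS, htx, hxi⟩ | ⟨u, hut, hS⟩
  · have hxe : x ≠ e := fun h => by subst h; omega
    simpa [hxe, not_lt.2 htx] using (hX x (by omega)).1 hxS
  · have htS : (⟨t, by omega⟩ : Fin n) ∈ S := hS _ (by simpa) (Fin.ne_of_val_ne hut.ne')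
    simpa [Fin.ext_iff, he, hi.ne'] using (hX _ (by simp; omega)).1 htS

theorem upset_Hfam_succ_subset :
    upset n (Hfam n t (i + 1)) ⊆ (upset n (Hfam n t i) \ lostSets t e) ∪ gainedSets t e := by
  intro S hS
  rw [mem_upset_Hfam (by omega) (by omega)] at hS
  rw [mem_union, mem_sdiff, mem_upset_Hfam (by omega) hi, mem_lostSets,
    mem_gainedSets (by omega)]
  rcases hS with ⟨hlow, x, hxS, htx, hxi⟩ | ⟨u, hut, hS⟩
  · have hnotLost : ¬∃ u : Fin n, u.val < t ∧ ∀ y : Fin n, y.val ≤ e.val →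
        (y ∈ S ↔ y ≠ u ∧ y.val < e.val) :=
      fun ⟨u, hut, hY⟩ => ((hY u (by omega)).1 (hlow u hut)).1 rfl
    by_cases hmid : ∃ y ∈ S, t ≤ y.val ∧ y.val < t + i
    · exact Or.inl ⟨Or.inl ⟨hlow, hmid⟩, hnotLost⟩
    · push Not at hmid
      have hxe : x = e := Fin.ext (by have := hmid x hxS htx; omega)
      refine Or.inr fun y hy => ⟨fun hyS => ?_, ?_⟩
      · by_contra! hy'
        exact (hmid y hyS (by omega)).not_gt (by have := Fin.val_ne_of_ne hy'.2; omega)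
      · rintro (hyt | rfl)
        exacts [hlow y hyt, hxe ▸ hxS]
  · have heS : e ∈ S := hS e (by omega) fun h => by subst h; omega
    exact Or.inl ⟨Or.inr ⟨u, hut, fun y hy => hS y (by omega)⟩,
      fun ⟨v, _, hY⟩ => (lt_irrefl _ ((hY e le_rfl).1 heS).2)⟩

theorem union_subset_upset_Hfam_succ :
    (upset n (Hfam n t i) \ lostSets t e) ∪ gainedSets t e ⊆ upset n (Hfam n t (i + 1)) := by
  intro S hS
  rw [mem_union, mem_sdiff, mem_upset_Hfam (by omega) hi, mem_lostSets,
    mem_gainedSets (by omega)] at hS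
  rw [mem_upset_Hfam (by omega) (by omega)]
  rcases hS with ⟨⟨hlow, x, hxS, htx, hxi⟩ | ⟨u, hut, hS⟩, hnotLost⟩ | hX
  · exact Or.inl ⟨hlow, x, hxS, htx, by omega⟩
  · by_cases heS : e ∈ S
    · refine Or.inr ⟨u, hut, fun y hy hyu => ?_⟩
      by_cases hye : y.val < t + i
      · exact hS y hye hyu
      · exact (Fin.ext (by omega) : e = y) ▸ heS
    by_cases huS : u ∈ S
    · refine Or.inl ⟨fun y hy => ?_, ⟨t, by omega⟩,
        hS _ (by simpa) (Fin.ne_of_val_ne hut.ne'), le_rfl, by simp⟩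
      by_cases hyu : y = u
      exacts [hyu ▸ huS, hS y (by omega) hyu]
    refine absurd ⟨u, hut, fun y hy => ?_⟩ hnotLost
    by_cases hyu : y = u
    · simp [hyu, huS]
    by_cases hye : y = e
    · simp [hye, heS]
    have := Fin.val_ne_of_ne hye
    simp only [hyu, ne_eq, not_false_eq_true, true_and]
    exact ⟨fun _ => by omega, fun _ => hS y (by omega) hyu⟩
  · exact Or.inl ⟨fun y hy => (hX y (by omega)).2 (Or.inl hy), e, (hX e le_rfl).2 (Or.inr rfl),
      by omega, by omega⟩

theorem upset_Hfam_succ :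
    upset n (Hfam n t (i + 1)) = (upset n (Hfam n t i) \ lostSets t e) ∪ gainedSets t e :=
  (upset_Hfam_succ_subset he hi).antisymm (union_subset_upset_Hfam_succ he hi)

end Recurrence

theorem nu_succ_add_mul_Phi {n t i : ℕ} (hi : 0 < i) (hn : t + i < n) :
    nu n t (i + 1) + t * Phi 2 (n - t - i - 1) = nu n t i + Phi i (n - t - i - 1) := by
  obtain ⟨e, he⟩ : ∃ e : Fin n, e.val = t + i := ⟨⟨t + i, hn⟩, rfl⟩
  have hsplit := sum_sdiff (f := fun S => Btilde (n - #S)) (lostSets_subset_upset_Hfam he hi)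
  rw [nu, nu, upset_Hfam_succ he hi,
    sum_union ((disjoint_gainedSets_upset_Hfam he hi).symm.mono_left sdiff_subset),
    sum_gainedSets (by omega), ← hsplit, sum_lostSets (by omega), he, Nat.add_sub_cancel_left,
    ← Nat.sub_sub]
  omega

theorem nu_succ_lt_of_lt {n t i : ℕ} (hi : 2 ≤ i) (hn : t + i + 3 ≤ n)
    (h : nu n t i < nu n t (i + 1)) : nu n t (i + 1) < nu n t (i + 2) := by
  obtain ⟨m, hm⟩ : ∃ m, n - t - i - 1 = m + 1 := ⟨n - t - i - 2, by omega⟩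
  have hi₁ := nu_succ_add_mul_Phi (n := n) (t := t) (i := i) (by omega) (by omega)
  have hi₂ := nu_succ_add_mul_Phi (n := n) (t := t) (i := i + 1) (by omega) (by omega)
  rw [hm, Phi_succ, Phi_succ] at hi₁
  rw [show n - t - (i + 1) - 1 = m by omega] at hi₂
  have hA := Phi_le_Phi_succ (s := i) (by omega) m
  have hB := Nat.mul_le_mul_left t (Phi_le_Phi_succ (s := 2) (by omega) m)
  -- if `t Φ(2, m) ≥ Φ(i + 1, m)` then also `t Φ(3, m) ≥ Φ(i, m)`, contradicting `h`
  linarith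

theorem nu_max_at_endpoints_general (n t : ℕ) (hn : t + 4 ≤ n) :
    (∀ i : ℕ, 2 ≤ i → i ≤ n - t - 3 →
        nu n t i < nu n t (i + 1) → nu n t (i + 1) < nu n t (i + 2)) ∧
    (Finset.Icc 2 (n - t - 1)).sup (fun i => nu n t i) = max (nu n t 2) (nu n t (n - t - 1)) := by
  have hstep : ∀ i : ℕ, 2 ≤ i → i ≤ n - t - 3 →
      nu n t i < nu n t (i + 1) → nu n t (i + 1) < nu n t (i + 2) :=
    fun i hi hin => nu_succ_lt_of_lt hi (by omega)
  exact ⟨hstep, sup_Icc_eq_max_of_lt_succ_imp_lt_succ (fun i hi hib => hstep i hi (by omega))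
    (by omega)⟩

/-- The sequence ν_i has no internal strict local maximum,
hence the maximum is attained at i = 2 or i = n - t - 1. -/
theorem nu_max_at_endpoints (n t : ℕ) (ht : 2 ≤ t) (hn : t + 4 ≤ n) :
    (∀ i : ℕ, 2 ≤ i → i ≤ n - t - 3 →
        nu n t i < nu n t (i + 1) → nu n t (i + 1) < nu n t (i + 2)) ∧
    (Finset.Icc 2 (n - t - 1)).sup (fun i => nu n t i) = max (nu n t 2) (nu n t (n - t - 1)) :=
  nu_max_at_endpoints_general n t hn
end

section
/- For every t ≥ 1 and every t-intersecting family A ⊆ Π(n), there exists a t-intersecting family A' ⊆ Π(n) with |A'| = |A| such that every two members p, q of A' have at least t common singleton blocks, i.e. |f(p) ∩ f(q)| ≥ t. -/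
open Finset

/-!
For `i ≠ j`, the compression `compress i j` splits `i` off its block whenever that block contains
`j`. Applied to a family `F`, moving `p` to its compression only when that is not already in `F`,
it is injective and preserves `t`-intersection, and it strictly increases the total number of
fixed points unless `F` is closed under every compression. In a closed family, isolating a point
of a common non-singleton block of `p` and `q` inside `q` keeps us in the family and never
enlarges `fixedSet p ∩ fixedSet q`; once all common blocks are singletons, the `t` common blocks
are `t` common fixed points.
-/

namespace SetPartition

variable {n : ℕ} {i j x : Fin n} {p q : SetPartition n} {b : Finset (Fin n)}

lemma mem_fixedSet : x ∈ fixedSet p ↔ {x} ∈ p.parts := by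
  simp [fixedSet]

lemma mem_of_mem_part_of_mem_parts (hj : j ∈ p.part i) (hb : b ∈ p.parts) (hjb : j ∈ b) :
    i ∈ b := by
  rw [← p.part_eq_of_mem hb hjb, p.part_eq_of_mem (p.part_mem.2 (mem_univ i)) hj]
  exact p.mem_part (mem_univ i)

/-- `p` with `i` split off into a singleton block (`p` itself if `i` is already fixed). -/
def isolate (i : Fin n) (p : SetPartition n) : SetPartition n :=
  (p.avoid {i}).extend (singleton_ne_empty i) sdiff_disjoint (by simp)

lemma singleton_mem_isolate : {i} ∈ (p.isolate i).parts := by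
  simp [isolate]

lemma mem_isolate_of_notMem (hb : b ∈ p.parts) (hib : i ∉ b) : b ∈ (p.isolate i).parts := by
  refine mem_insert_of_mem ((p.mem_avoid).2 ⟨b, hb, fun h => ?_, ?_⟩)
  · obtain ⟨y, hy⟩ := p.nonempty_of_mem_parts hb
    exact hib (mem_singleton.1 (h hy) ▸ hy)
  · rw [sdiff_singleton_eq_erase, erase_eq_of_notMem hib]

lemma mem_parts_or_insert_mem_parts_of_mem_isolate (hb : b ∈ (p.isolate i).parts)
    (hib : i ∉ b) : b ∈ p.parts ∨ insert i b ∈ p.parts := by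
  rcases mem_insert.1 hb with rfl | hb
  · exact absurd (mem_singleton_self i) hib
  obtain ⟨d, hd, -, rfl⟩ := (p.mem_avoid).1 hb
  rw [sdiff_singleton_eq_erase]
  by_cases hid : i ∈ d
  · exact Or.inr (by rwa [insert_erase hid])
  · exact Or.inl (by rwa [erase_eq_of_notMem hid])

lemma eq_singleton_of_mem_isolate (hb : b ∈ (p.isolate i).parts) (hib : i ∈ b) : b = {i} :=
  (p.isolate i).eq_of_mem_parts hb singleton_mem_isolate hib (mem_singleton_self i)

lemma insert_fixedSet_subset_fixedSet_isolate :
    insert i (fixedSet p) ⊆ fixedSet (p.isolate i) := by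
  intro x hx
  rw [mem_fixedSet]
  rcases mem_insert.1 hx with rfl | hx
  · exact singleton_mem_isolate
  · by_cases hxi : x = i
    · exact hxi ▸ singleton_mem_isolate
    · exact mem_isolate_of_notMem (mem_fixedSet.1 hx) (by simpa [eq_comm] using hxi)

lemma notMem_fixedSet_of_mem_part (hij : i ≠ j) (hj : j ∈ p.part i) : i ∉ fixedSet p := by
  intro hi
  rw [p.part_eq_of_mem (mem_fixedSet.1 hi) (mem_singleton_self i)] at hj
  exact hij (mem_singleton.1 hj).symm

lemma fixedSet_ssubset_fixedSet_isolate (hij : i ≠ j) (hj : j ∈ p.part i) :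
    fixedSet p ⊂ fixedSet (p.isolate i) :=
  (ssubset_insert (notMem_fixedSet_of_mem_part hij hj)).trans_subset
    insert_fixedSet_subset_fixedSet_isolate

lemma parts_subset_of_isolate_eq (hij : i ≠ j) (hp : j ∈ p.part i) (hq : j ∈ q.part i)
    (h : p.isolate i = q.isolate i) : p.parts ⊆ q.parts := by
  intro b hb
  by_cases hib : i ∈ b
  · have hbp : p.part i = b := p.part_eq_of_mem hb hib
    have hjb : j ∈ b.erase i := mem_erase.2 ⟨hij.symm, hbp ▸ hp⟩
    have hmem : b.erase i ∈ (q.isolate i).parts := by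
      rw [← h, ← sdiff_singleton_eq_erase]
      exact mem_insert_of_mem ((p.mem_avoid).2
        ⟨b, hb, fun hsub => hij (mem_singleton.1 (hsub (mem_of_mem_erase hjb))).symm, rfl⟩)
    rcases mem_parts_or_insert_mem_parts_of_mem_isolate hmem (notMem_erase i b) with h' | h'
    · exact absurd (mem_of_mem_part_of_mem_parts hq h' hjb) (notMem_erase i b)
    · rwa [insert_erase hib] at h'
  · rcases mem_parts_or_insert_mem_parts_of_mem_isolate (h ▸ mem_isolate_of_notMem hb hib) hib
      with h' | h'
    · exact h'
    · have hjb : j ∈ b := by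
        rw [q.part_eq_of_mem h' (mem_insert_self i b)] at hq
        exact (mem_insert.1 hq).resolve_left hij.symm
      exact absurd (mem_of_mem_part_of_mem_parts hp hb hjb) hib

lemma isolate_injOn (hij : i ≠ j) : Set.InjOn (isolate i) {p : SetPartition n | j ∈ p.part i} :=
  fun _ hp _ hq h => Finpartition.ext ((parts_subset_of_isolate_eq hij hp hq h).antisymm
    (parts_subset_of_isolate_eq hij hq hp h.symm))

lemma card_parts_inter_le_card_parts_inter_isolate :
    #(p.parts ∩ q.parts) ≤ #((p.isolate i).parts ∩ (q.isolate i).parts) := by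
  refine card_le_card_of_injOn (fun b => if i ∈ b then {i} else b) (fun b hb => ?_) ?_
  · simp only [mem_coe, mem_inter] at hb ⊢
    split_ifs with hib
    · exact ⟨singleton_mem_isolate, singleton_mem_isolate⟩
    · exact ⟨mem_isolate_of_notMem hb.1 hib, mem_isolate_of_notMem hb.2 hib⟩
  · intro b hb b' hb' h
    simp only [coe_inter, Set.mem_inter_iff, mem_coe] at hb hb' h
    split_ifs at h with hib hib' hib'
    · exact p.eq_of_mem_parts hb.1 hb'.1 hib hib'
    · exact absurd (h ▸ mem_singleton_self i) hib'
    · exact absurd (h ▸ mem_singleton_self i) hib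
    · exact h

lemma fixedSet_inter_fixedSet_isolate_subset (hqi : q.part i ∈ p.parts) (hi : i ∉ fixedSet p) :
    fixedSet p ∩ fixedSet (q.isolate i) ⊆ fixedSet p ∩ fixedSet q := by
  intro x hx
  rw [mem_inter, mem_fixedSet, mem_fixedSet] at hx
  rw [mem_inter, mem_fixedSet, mem_fixedSet]
  refine ⟨hx.1, ?_⟩
  have hxi : x ≠ i := by
    rintro rfl
    exact hi (mem_fixedSet.2 hx.1)
  rcases mem_parts_or_insert_mem_parts_of_mem_isolate hx.2 (by simpa using hxi.symm) with h | h
  · exact h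
  · have hqx : q.part i = insert i {x} := q.part_eq_of_mem h (mem_insert_self i {x})
    have : insert i {x} = ({x} : Finset (Fin n)) :=
      p.eq_of_mem_parts (hqx ▸ hqi) hx.1 (by simp) (mem_singleton_self x)
    exact absurd (this ▸ mem_insert_self i {x}) (by simpa using hxi.symm)

lemma card_parts_inter_le_card_fixedSet_inter (h : ∀ b ∈ p.parts ∩ q.parts, #b ≤ 1) :
    #(p.parts ∩ q.parts) ≤ #(fixedSet p ∩ fixedSet q) := by
  refine (card_le_card fun b hb => ?_).trans (card_image_le (f := fun x => ({x} : Finset (Fin n))))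
  have hb' := mem_inter.1 hb
  obtain ⟨x, rfl⟩ := card_eq_one.1
    ((h b hb).antisymm (card_pos.2 (p.nonempty_of_mem_parts hb'.1)))
  exact mem_image.2 ⟨x, mem_inter.2 ⟨mem_fixedSet.2 hb'.1, mem_fixedSet.2 hb'.2⟩, rfl⟩

def compress (i j : Fin n) (p : SetPartition n) : SetPartition n :=
  if j ∈ p.part i then p.isolate i else p

lemma compress_of_mem_part (hj : j ∈ p.part i) : compress i j p = p.isolate i := if_pos hj

lemma mem_part_of_compress_ne (h : compress i j p ≠ p) : j ∈ p.part i := by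
  by_contra hj
  exact h (if_neg hj)

-- A block of `p` that is `q.part i` minus `i` would contain `j`, hence also `i`.
lemma parts_inter_compress_subset (hij : i ≠ j) (hp : j ∈ p.part i) :
    p.parts ∩ (compress i j q).parts ⊆ (p.isolate i).parts ∩ q.parts := by
  intro b hb
  obtain ⟨hbp, hbq⟩ := mem_inter.1 hb
  have hjb : i ∈ b → j ∈ b := fun hib => p.part_eq_of_mem hbp hib ▸ hp
  by_cases hq : j ∈ q.part i
  · rw [compress_of_mem_part hq] at hbq
    have hib : i ∉ b := fun hib =>
      hij (mem_singleton.1 (eq_singleton_of_mem_isolate hbq hib ▸ hjb hib)).symm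
    refine mem_inter.2 ⟨mem_isolate_of_notMem hbp hib, ?_⟩
    refine (mem_parts_or_insert_mem_parts_of_mem_isolate hbq hib).resolve_right fun h => hib ?_
    rw [q.part_eq_of_mem h (mem_insert_self i b)] at hq
    exact mem_of_mem_part_of_mem_parts hp hbp ((mem_insert.1 hq).resolve_left hij.symm)
  · rw [compress, if_neg hq] at hbq
    have hib : i ∉ b := fun hib => hq (q.part_eq_of_mem hbq hib ▸ hjb hib)
    exact mem_inter.2 ⟨mem_isolate_of_notMem hbp hib, hbq⟩

def compressIn (F : Finset (SetPartition n)) (i j : Fin n) (p : SetPartition n) :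
    SetPartition n :=
  if compress i j p ∈ F then p else compress i j p

variable {t : ℕ} {F : Finset (SetPartition n)}

lemma compressIn_of_mem (h : compress i j p ∈ F) : compressIn F i j p = p := if_pos h

lemma compressIn_of_notMem (h : compress i j p ∉ F) : compressIn F i j p = compress i j p :=
  if_neg h

lemma mem_part_of_compress_notMem (hp : p ∈ F) (h : compress i j p ∉ F) : j ∈ p.part i :=
  mem_part_of_compress_ne fun he => h (he.symm ▸ hp)

lemma compressIn_injOn (hij : i ≠ j) : Set.InjOn (compressIn F i j) F := by
  intro p hp q hq h
  unfold compressIn at h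
  split_ifs at h with hpF hqF hqF
  · exact h
  · exact absurd (h ▸ hp) hqF
  · exact absurd (h.symm ▸ hq) hpF
  · rw [compress_of_mem_part (mem_part_of_compress_notMem hp hpF),
      compress_of_mem_part (mem_part_of_compress_notMem hq hqF)] at h
    exact isolate_injOn hij (mem_part_of_compress_notMem hp hpF)
      (mem_part_of_compress_notMem hq hqF) h

lemma card_image_compressIn (hij : i ≠ j) : #(F.image (compressIn F i j)) = #F :=
  card_image_of_injOn (compressIn_injOn hij)

lemma le_card_parts_inter_compressIn (hij : i ≠ j) (hF : IsTIntersecting n t F) (hp : p ∈ F)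
    (hq : q ∈ F) (hpF : compress i j p ∈ F) :
    t ≤ #(p.parts ∩ (compressIn F i j q).parts) := by
  by_cases hqF : compress i j q ∈ F
  · rw [compressIn_of_mem hqF]
    exact hF p hp q hq
  have hqi := mem_part_of_compress_notMem hq hqF
  calc t ≤ #(q.parts ∩ (compress i j p).parts) := hF q hq _ hpF
    _ ≤ #((q.isolate i).parts ∩ p.parts) := card_le_card (parts_inter_compress_subset hij hqi)
    _ = #(p.parts ∩ (compressIn F i j q).parts) := by
      rw [inter_comm, compressIn_of_notMem hqF, compress_of_mem_part hqi]

lemma isTIntersecting_image_compressIn (hij : i ≠ j) (hF : IsTIntersecting n t F) :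
    IsTIntersecting n t (F.image (compressIn F i j)) := by
  simp only [IsTIntersecting, coe_image, Set.forall_mem_image, mem_coe]
  intro p hp q hq
  by_cases hpF : compress i j p ∈ F
  · rw [compressIn_of_mem hpF]
    exact le_card_parts_inter_compressIn hij hF hp hq hpF
  by_cases hqF : compress i j q ∈ F
  · rw [inter_comm, compressIn_of_mem hqF]
    exact le_card_parts_inter_compressIn hij hF hq hp hqF
  rw [compressIn_of_notMem hpF, compressIn_of_notMem hqF,
    compress_of_mem_part (mem_part_of_compress_notMem hp hpF),
    compress_of_mem_part (mem_part_of_compress_notMem hq hqF)]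
  exact (hF p hp q hq).trans card_parts_inter_le_card_parts_inter_isolate

lemma sum_card_compl_fixedSet_image_compressIn_lt (hij : i ≠ j) (hp : p ∈ F)
    (hpF : compress i j p ∉ F) :
    ∑ q ∈ F.image (compressIn F i j), #(fixedSet q)ᶜ < ∑ q ∈ F, #(fixedSet q)ᶜ := by
  have hlt : ∀ q ∈ F, compress i j q ∉ F →
      #(fixedSet (compressIn F i j q))ᶜ < #(fixedSet q)ᶜ := by
    intro q hq hqF
    have hqi := mem_part_of_compress_notMem hq hqF
    rw [compressIn_of_notMem hqF, compress_of_mem_part hqi]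
    exact card_lt_card (compl_ssubset_compl.2 (fixedSet_ssubset_fixedSet_isolate hij hqi))
  rw [sum_image (compressIn_injOn hij)]
  refine sum_lt_sum (fun q hq => ?_) ⟨p, hp, hlt p hp hpF⟩
  by_cases hqF : compress i j q ∈ F
  · rw [compressIn_of_mem hqF]
  · exact (hlt q hq hqF).le

lemma le_card_fixedSet_inter_of_forall_compress_mem (hF : IsTIntersecting n t F)
    (hclosed : ∀ p ∈ F, ∀ i j : Fin n, i ≠ j → compress i j p ∈ F)
    {p q : SetPartition n} (hp : p ∈ F) (hq : q ∈ F) :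
    t ≤ #(fixedSet p ∩ fixedSet q) := by
  by_cases hbig : ∃ b ∈ p.parts ∩ q.parts, 1 < #b
  · obtain ⟨b, hb, hb1⟩ := hbig
    obtain ⟨hbp, hbq⟩ := mem_inter.1 hb
    obtain ⟨i, hi, j, hj, hij⟩ := one_lt_card.1 hb1
    have hqi : q.part i = b := q.part_eq_of_mem hbq hi
    have hjq : j ∈ q.part i := hqi ▸ hj
    have hpi : i ∉ fixedSet p := notMem_fixedSet_of_mem_part hij (p.part_eq_of_mem hbp hi ▸ hj)
    have hmem : q.isolate i ∈ F := compress_of_mem_part hjq ▸ hclosed q hq i j hij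
    calc t ≤ #(fixedSet p ∩ fixedSet (q.isolate i)) :=
          le_card_fixedSet_inter_of_forall_compress_mem hF hclosed hp hmem
      _ ≤ #(fixedSet p ∩ fixedSet q) :=
          card_le_card (fixedSet_inter_fixedSet_isolate_subset (hqi ▸ hbp) hpi)
  · push Not at hbig
    exact (hF p hp q hq).trans (card_parts_inter_le_card_fixedSet_inter hbig)
termination_by #(fixedSet q)ᶜ
decreasing_by exact card_lt_card (compl_ssubset_compl.2 (fixedSet_ssubset_fixedSet_isolate hij hjq))

theorem exists_card_eq_le_card_fixedSet_inter (F : Finset (SetPartition n))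
    (hF : IsTIntersecting n t F) :
    ∃ G : Finset (SetPartition n), IsTIntersecting n t G ∧ #G = #F ∧
      ∀ p ∈ G, ∀ q ∈ G, t ≤ #(fixedSet p ∩ fixedSet q) := by
  by_cases hclosed : ∀ p ∈ F, ∀ i j : Fin n, i ≠ j → compress i j p ∈ F
  · exact ⟨F, hF, rfl, fun p hp q hq =>
      le_card_fixedSet_inter_of_forall_compress_mem hF hclosed hp hq⟩
  push Not at hclosed
  obtain ⟨p, hp, i, j, hij, hpF⟩ := hclosed
  obtain ⟨G, hG, hcard, hfix⟩ :=
    exists_card_eq_le_card_fixedSet_inter (F.image (compressIn F i j))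
      (isTIntersecting_image_compressIn hij hF)
  exact ⟨G, hG, hcard.trans (card_image_compressIn hij), hfix⟩
termination_by ∑ q ∈ F, #(fixedSet q)ᶜ
decreasing_by exact sum_card_compl_fixedSet_image_compressIn_lt hij hp hpF

end SetPartition

theorem compression_to_fixed_points_general (n t : ℕ)
    (A : Set (SetPartition n)) (hA : IsTIntersecting n t A) :
    ∃ A' : Set (SetPartition n), IsTIntersecting n t A' ∧ A'.ncard = A.ncard ∧
      ∀ p ∈ A', ∀ q ∈ A', t ≤ (fixedSet p ∩ fixedSet q).card := by
  obtain ⟨F, rfl⟩ := (Set.toFinite A).exists_finset_coe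
  obtain ⟨G, hG, hcard, hfix⟩ := SetPartition.exists_card_eq_le_card_fixedSet_inter F hA
  exact ⟨G, hG, by rw [Set.ncard_coe_finset, Set.ncard_coe_finset, hcard], hfix⟩

/-- Compression — every t-intersecting family can be replaced by one of
the same size in which any two members share at least t common singleton blocks. -/
theorem compression_to_fixed_points (n t : ℕ) (ht : 1 ≤ t)
    (A : Set (SetPartition n)) (hA : IsTIntersecting n t A) :
    ∃ A' : Set (SetPartition n), IsTIntersecting n t A' ∧ A'.ncard = A.ncard ∧
      ∀ p ∈ A', ∀ q ∈ A', t ≤ (fixedSet p ∩ fixedSet q).card :=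
  compression_to_fixed_points_general n t A hA
end

section
/- For every integer n ≥ 0, B̃(n) = e^{-1} · Σ_{i=0}^{∞} (i−1)^n / i!, with the convention 0^0 = 1 (so the i = 0 term is (−1)^n). -/
/-!
Removing the block that contains a point `a` from a singleton-free partition of `insert a s`
leaves a singleton-free partition `Q` of some `U ⊊ s`, and every pair `(U, Q)` arises once.
Adding the term `U = s` gives `B̃(m+1) + B̃(m) = ∑ₖ C(m,k) B̃(k)`. The series
`Tₙ = ∑ᵢ (i-1)ⁿ/i!` satisfies the same recurrence, since `Tₙ₊₁ + Tₙ = ∑ᵢ (i-1)ⁿ i/i! = ∑ᵢ iⁿ/i!`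
and expanding `iⁿ = ((i-1)+1)ⁿ` gives `∑ₖ C(n,k) Tₖ`; as `T₀ = e`, `B̃(n) = e⁻¹ Tₙ`.
-/

open Finset

open Nat

noncomputable def dobinskiSeries (n : ℕ) : ℝ := ∑' i : ℕ, ((i : ℝ) - 1) ^ n / i !

lemma summable_add_pow_div_factorial (c : ℝ) (n : ℕ) :
    Summable fun i : ℕ => ((i : ℝ) + c) ^ n / i ! := by
  refine .of_norm_bounded ((Real.summable_pow_div_factorial (Real.exp 1)).mul_left
    (n ! * Real.exp |c|)) fun i => ?_
  have hpow : ((i : ℝ) + |c|) ^ n ≤ n ! * Real.exp ((i : ℝ) + |c|) := by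
    have := Real.pow_div_factorial_le_exp _ (by positivity : 0 ≤ (i : ℝ) + |c|) n
    rwa [div_le_iff₀ (by positivity), mul_comm] at this
  calc ‖((i : ℝ) + c) ^ n / (i ! : ℝ)‖ = |(i : ℝ) + c| ^ n / i ! := by
        rw [Real.norm_eq_abs, abs_div, abs_pow, Nat.abs_cast]
    _ ≤ ((i : ℝ) + |c|) ^ n / i ! := by
        gcongr
        exact (abs_add_le _ _).trans (by rw [Nat.abs_cast])
    _ ≤ n ! * Real.exp ((i : ℝ) + |c|) / i ! := by gcongr
    _ = n ! * Real.exp |c| * (Real.exp 1 ^ i / i !) := by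
        rw [Real.exp_one_pow, Real.exp_add]; ring

lemma summable_sub_one_pow_div_factorial (n : ℕ) :
    Summable fun i : ℕ => ((i : ℝ) - 1) ^ n / i ! := by
  simpa [sub_eq_add_neg] using summable_add_pow_div_factorial (-1) n

lemma dobinskiSeries_zero : dobinskiSeries 0 = Real.exp 1 := by
  simp [dobinskiSeries, Real.exp_eq_exp_ℝ, NormedSpace.exp_eq_tsum_div]

lemma dobinskiSeries_succ_add_self (n : ℕ) :
    dobinskiSeries (n + 1) + dobinskiSeries n = ∑' i : ℕ, (i : ℝ) ^ n / i ! := by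
  have hshift : Summable fun i : ℕ => (i : ℝ) ^ n / i ! := by
    simpa using summable_add_pow_div_factorial 0 n
  calc dobinskiSeries (n + 1) + dobinskiSeries n
      = ∑' i : ℕ, ((i : ℝ) - 1) ^ n * i / i ! := by
        rw [dobinskiSeries, dobinskiSeries, ← (summable_sub_one_pow_div_factorial _).tsum_add
          (summable_sub_one_pow_div_factorial _)]
        congr 1; funext i; ring
    _ = ∑' i : ℕ, (i : ℝ) ^ n / i ! := by
        rw [tsum_eq_zero_add' ?_]
        · simp only [Nat.cast_zero, mul_zero, zero_div, zero_add]
          congr 1; funext i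
          rw [Nat.factorial_succ]; push_cast; field_simp; ring
        · refine hshift.congr fun i => ?_
          rw [Nat.factorial_succ]; push_cast; field_simp; ring

lemma tsum_pow_div_factorial_eq_sum_dobinskiSeries (n : ℕ) :
    ∑' i : ℕ, (i : ℝ) ^ n / i ! = ∑ k ∈ range (n + 1), (n.choose k : ℝ) * dobinskiSeries k := by
  have hexpand (i : ℕ) : (i : ℝ) ^ n / i ! =
      ∑ k ∈ range (n + 1), (n.choose k : ℝ) * (((i : ℝ) - 1) ^ k / i !) := by
    rw [← sub_add_cancel (i : ℝ) 1, add_pow, sum_div, add_sub_cancel_right]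
    refine sum_congr rfl fun k _ => ?_
    rw [one_pow, mul_one]; ring
  rw [tsum_congr hexpand, Summable.tsum_finsetSum fun k _ =>
    (summable_sub_one_pow_div_factorial k).mul_left _]
  simp only [tsum_mul_left, dobinskiSeries]

namespace Finpartition

variable {α : Type*} [DecidableEq α] {s : Finset α}

lemma sup_parts_erase_part (P : Finpartition s) (a : α) :
    (P.parts.erase (P.part a)).sup id = s \ P.part a := by
  ext x
  simp only [mem_sup, mem_erase, id_eq, mem_sdiff]
  constructor
  · rintro ⟨c, ⟨hca, hc⟩, hxc⟩
    refine ⟨P.subset hc hxc, fun hxa => hca ?_⟩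
    obtain ⟨p, hp, hxp, hap⟩ := P.mem_part_iff_exists.1 hxa
    rw [P.part_eq_of_mem hp hap]
    exact P.eq_of_mem_parts hc hp hxc hxp
  · rintro ⟨hxs, hxa⟩
    obtain ⟨c, hc, hxc⟩ := P.exists_mem hxs
    exact ⟨c, ⟨fun h => hxa (h ▸ hxc), hc⟩, hxc⟩

end Finpartition

section SingletonFree

variable {α : Type*} [DecidableEq α] {s : Finset α} {a : α}

abbrev SingletonFreeFinpartition (s : Finset α) : Type _ :=
  {P : Finpartition s // ∀ b ∈ P.parts, b.card ≠ 1}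

lemma card_singletonFreeFinpartition_empty :
    Nat.card (SingletonFreeFinpartition (∅ : Finset α)) = 1 := by
  rw [Nat.card_eq_one_iff_unique]
  refine ⟨⟨fun P Q => Subtype.ext (Subsingleton.elim (α := Finpartition (⊥ : Finset α)) _ _)⟩,
    ⟨⟨Finpartition.empty _, by simp⟩⟩⟩

def extendByBlock (ha : a ∉ s) {U : Finset α} (hU : U ⊆ s) (Q : Finpartition U) :
    Finpartition (insert a s) :=
  Q.extend (b := insert a (s \ U)) (insert_ne_empty _ _)
    (disjoint_insert_right.2 ⟨fun h => ha (hU h), disjoint_sdiff⟩)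
    (by rw [sup_eq_union, union_insert, union_sdiff_of_subset hU])

lemma extendByBlock_part (ha : a ∉ s) {U : Finset α} (hU : U ⊆ s) (Q : Finpartition U) :
    (extendByBlock ha hU Q).part a = insert a (s \ U) :=
  Finpartition.part_eq_of_mem _ (mem_insert_self _ _) (mem_insert_self _ _)

lemma extendByBlock_singletonFree (ha : a ∉ s) {U : Finset α} (hU : U ⊆ s) (hUs : U ≠ s)
    {Q : Finpartition U} (hQ : ∀ b ∈ Q.parts, b.card ≠ 1) :
    ∀ b ∈ (extendByBlock ha hU Q).parts, b.card ≠ 1 := by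
  intro b hb
  rcases mem_insert.1 hb with rfl | hb
  · have : (s \ U).Nonempty := sdiff_nonempty.2 fun h => hUs (subset_antisymm hU h)
    rw [card_insert_of_notMem fun h => ha (mem_sdiff.1 h).1]
    have := this.card_pos
    omega
  · exact hQ b hb

def extendSingletonFree (ha : a ∉ s)
    (UQ : Σ U : s.powerset.erase s, SingletonFreeFinpartition (U : Finset α)) :
    SingletonFreeFinpartition (insert a s) :=
  ⟨extendByBlock ha (mem_powerset.1 (mem_of_mem_erase UQ.1.2)) UQ.2.1,
    extendByBlock_singletonFree ha _ (ne_of_mem_erase UQ.1.2) UQ.2.2⟩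

lemma extendSingletonFree_injective (ha : a ∉ s) :
    Function.Injective (extendSingletonFree ha) := by
  rintro ⟨⟨U, hU⟩, Q, _⟩ ⟨⟨V, hV⟩, R, _⟩ h
  have hUs := mem_powerset.1 (mem_of_mem_erase hU)
  have hVs := mem_powerset.1 (mem_of_mem_erase hV)
  have hpart := congrArg (fun P : SingletonFreeFinpartition (insert a s) => P.1.part a) h
  simp only [extendSingletonFree, extendByBlock_part] at hpart
  have hUV : U = V := by
    have hsdiff : s \ U = s \ V := by
      simpa [erase_insert fun h => ha (mem_sdiff.1 h).1] using congrArg (·.erase a) hpart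
    rw [← Finset.sdiff_sdiff_eq_self hUs, hsdiff, Finset.sdiff_sdiff_eq_self hVs]
  subst hUV
  have hQR : Q = R := by
    have hparts := congrArg (fun P : SingletonFreeFinpartition (insert a s) => P.1.parts) h
    simp only [extendSingletonFree, extendByBlock, Finpartition.extend_parts] at hparts
    have hblock (R : Finpartition U) : insert a (s \ U) ∉ R.parts := fun hR =>
      ha (hUs (R.subset hR (mem_insert_self _ _)))
    have := congrArg (·.erase (insert a (s \ U))) hparts
    simp only [erase_insert (hblock Q), erase_insert (hblock R)] at this
    exact Finpartition.ext this
  subst hQR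
  rfl

lemma extendSingletonFree_surjective (ha : a ∉ s) :
    Function.Surjective (extendSingletonFree ha) := by
  rintro ⟨P, hP⟩
  have haB : a ∈ P.part a := P.mem_part (mem_insert_self a s)
  have hBs : P.part a ⊆ insert a s := P.part_subset a
  have hUs : insert a s \ P.part a ⊆ s := fun x hx => by
    obtain ⟨hx, hxB⟩ := mem_sdiff.1 hx
    exact (mem_insert.1 hx).resolve_left fun h => hxB (h ▸ haB)
  have hblock : insert a (s \ (insert a s \ P.part a)) = P.part a := by
    ext x
    simp only [mem_insert, mem_sdiff, not_and, not_not]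
    constructor
    · rintro (rfl | ⟨hx, hxB⟩)
      exacts [haB, hxB (Or.inr hx)]
    · intro hxB
      exact (mem_insert.1 (hBs hxB)).imp_right fun hx => ⟨hx, fun _ => hxB⟩
  have hUne : insert a s \ P.part a ≠ s := fun h => by
    refine hP _ (P.part_mem.2 (mem_insert_self a s)) (card_eq_one.2 ⟨a, ?_⟩)
    rw [← hblock, h, sdiff_self, bot_eq_empty, insert_empty]
  refine ⟨⟨⟨_, mem_erase.2 ⟨hUne, mem_powerset.2 hUs⟩⟩,
    P.ofSubset (erase_subset _ _) (P.sup_parts_erase_part a),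
    fun b hb => hP b (mem_of_mem_erase hb)⟩, Subtype.ext (Finpartition.ext ?_)⟩
  simp only [extendSingletonFree, extendByBlock, Finpartition.extend_parts,
    Finpartition.ofSubset_parts, hblock]
  exact insert_erase (P.part_mem.2 (mem_insert_self a s))

lemma card_singletonFreeFinpartition_insert_add (ha : a ∉ s) :
    Nat.card (SingletonFreeFinpartition (insert a s)) + Nat.card (SingletonFreeFinpartition s) =
      ∑ U ∈ s.powerset, Nat.card (SingletonFreeFinpartition U) := by
  rw [← Nat.card_eq_of_bijective _
      ⟨extendSingletonFree_injective ha, extendSingletonFree_surjective ha⟩, Nat.card_sigma,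
    sum_coe_sort (s.powerset.erase s) fun U => Nat.card (SingletonFreeFinpartition U),
    sum_erase_add _ _ (mem_powerset_self s)]

theorem card_singletonFreeFinpartition_eq_of_recurrence {R : Type*} [Ring R] (f : ℕ → R)
    (h0 : f 0 = 1)
    (hsucc : ∀ m, f (m + 1) + f m = ∑ k ∈ range (m + 1), (m.choose k : R) * f k)
    (s : Finset α) : (Nat.card (SingletonFreeFinpartition s) : R) = f s.card := by
  induction s using Finset.strongInduction with
  | H s ih =>
    rcases s.eq_empty_or_nonempty with rfl | ⟨a, ha⟩
    · rw [card_singletonFreeFinpartition_empty, card_empty, h0, Nat.cast_one]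
    obtain ⟨t, hat, rfl⟩ : ∃ t, a ∉ t ∧ s = insert a t :=
      ⟨s.erase a, notMem_erase a s, (insert_erase ha).symm⟩
    have hrec := congrArg (Nat.cast : ℕ → R) (card_singletonFreeFinpartition_insert_add hat)
    push_cast at hrec
    rw [ih t (ssubset_insert hat), sum_congr rfl fun U hU =>
      ih U ((mem_powerset.1 hU).trans_ssubset (ssubset_insert hat)),
      sum_powerset_apply_card f] at hrec
    simp only [nsmul_eq_mul] at hrec
    rw [card_insert_of_notMem hat]
    exact add_right_cancel (hrec.trans (hsucc _).symm)

end SingletonFree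

/-- Dobinski-type formula for the singleton-free Bell numbers. -/
theorem btilde_dobinski (n : ℕ) :
    (Btilde n : ℝ) = (Real.exp 1)⁻¹ * ∑' i : ℕ, ((i : ℝ) - 1) ^ n / (Nat.factorial i) := by
  have h := card_singletonFreeFinpartition_eq_of_recurrence
    (fun m => (Real.exp 1)⁻¹ * dobinskiSeries m) ?_ ?_ (univ : Finset (Fin n))
  · rwa [Finset.card_univ, Fintype.card_fin] at h
  · rw [dobinskiSeries_zero, inv_mul_cancel₀ (Real.exp_ne_zero 1)]
  · intro m
    rw [← mul_add, dobinskiSeries_succ_add_self, tsum_pow_div_factorial_eq_sum_dobinskiSeries,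
      mul_sum]
    exact sum_congr rfl fun k _ => mul_left_comm _ _ _
end

section
/- For all integers a ≥ 0 and b ≥ 0, Σ_{j=0}^{b} C(b,j) · B̃(a + b − j) = e^{-1} · Σ_{i=0}^{∞} (i−1)^a · i^b / i!, with the convention 0^0 = 1. -/
open Finset

/-!
Both sides satisfy the same recursion. Removing the block containing one point `a` of a
singleton-free partition of `insert a s` leaves a singleton-free partition of a proper subset
`t ⊂ s`, so `B̃(n + 1) + B̃(n) = ∑ₖ C(n, k) B̃(k)`. The series `D(m) = ∑ᵢ (i - 1)ᵐ / i!` obeys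
the same recursion, because `(i - 1)ⁿ⁺¹ + (i - 1)ⁿ = (i - 1)ⁿ i` and `i / i! = 1 / (i - 1)!`
turn `D(n + 1) + D(n)` into `∑ᵢ iⁿ / i! = ∑ₖ C(n, k) D(k)`, and `D(0) = e`. Hence
`B̃(m) = D(m) / e`, and the binomial theorem `∑ⱼ C(b, j) (i - 1)ᵇ⁻ʲ = iᵇ` sums the transform
termwise.
-/

open Nat Real

theorem tsum_mul_div_factorial {K : Type*} [Field K] [CharZero K] [TopologicalSpace K]
    (f : ℕ → K) : ∑' i : ℕ, f i * i / i ! = ∑' i : ℕ, f (i + 1) / i ! := by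
  rw [← (add_left_injective 1).tsum_eq (f := fun i : ℕ => f i * i / i !)]
  · refine tsum_congr fun i => ?_
    have hi : (i + 1 : K) ≠ 0 := by exact_mod_cast succ_ne_zero i
    rw [factorial_succ]
    push_cast
    field_simp
  · rintro (_ | i) hi
    · simp at hi
    · exact ⟨i, rfl⟩

theorem summable_pow_sub_div_factorial (c : ℝ) (m : ℕ) :
    Summable fun i : ℕ => ((i : ℝ) - c) ^ m / i ! := by
  refine .of_norm_bounded ((summable_pow_div_factorial (exp 1)).mul_left (m ! * exp |c|))
    fun i => ?_
  have hbound : |(i : ℝ) - c| ^ m ≤ m ! * exp |c| * exp 1 ^ i := by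
    calc |(i : ℝ) - c| ^ m ≤ (i + |c|) ^ m := by
          gcongr
          exact (abs_sub _ _).trans (by rw [Nat.abs_cast])
      _ ≤ m ! * exp (i + |c|) := by
          have := Real.pow_div_factorial_le_exp (i + |c|) (by positivity) m
          rwa [div_le_iff₀ (by positivity), mul_comm] at this
      _ = m ! * exp |c| * exp 1 ^ i := by
          rw [← exp_nat_mul, mul_one, exp_add]; ring
  rw [norm_div, norm_pow, Real.norm_eq_abs, RCLike.norm_natCast, mul_div_assoc']
  gcongr

noncomputable def dobinskiSum (c : ℝ) (m : ℕ) : ℝ := ∑' i : ℕ, ((i : ℝ) - c) ^ m / i !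

theorem dobinskiSum_zero (c : ℝ) : dobinskiSum c 0 = exp 1 := by
  simp [dobinskiSum, exp_eq_exp_ℝ, NormedSpace.exp_eq_tsum_div]

theorem dobinskiSum_succ_add (c : ℝ) (n : ℕ) :
    dobinskiSum c (n + 1) + c * dobinskiSum c n =
      ∑ k ∈ range (n + 1), n.choose k * dobinskiSum c k := by
  have hs := summable_pow_sub_div_factorial c
  calc dobinskiSum c (n + 1) + c * dobinskiSum c n
      = ∑' i : ℕ, ((i : ℝ) - c) ^ n * i / i ! := by
        rw [dobinskiSum, dobinskiSum, ← tsum_mul_left, ← (hs _).tsum_add ((hs n).mul_left c)]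
        exact tsum_congr fun i => by ring
    _ = ∑' i : ℕ, (((i : ℝ) - c) + 1) ^ n / i ! := by
        rw [tsum_mul_div_factorial]; push_cast; exact tsum_congr fun i => by ring
    _ = ∑' i : ℕ, ∑ k ∈ range (n + 1), n.choose k * (((i : ℝ) - c) ^ k / i !) := by
        refine tsum_congr fun i => ?_
        rw [add_pow, sum_div]
        exact sum_congr rfl fun k _ => by ring
    _ = ∑ k ∈ range (n + 1), n.choose k * dobinskiSum c k := by
        rw [Summable.tsum_finsetSum fun k _ => (hs k).mul_left _]
        exact sum_congr rfl fun k _ => tsum_mul_left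

namespace Finpartition

theorem avoid_parts_of_mem {α : Type*} [GeneralizedBooleanAlgebra α] [DecidableEq α] {a b : α}
    (P : Finpartition a) (hb : b ∈ P.parts) : (P.avoid b).parts = P.parts.erase b := by
  ext c
  rw [mem_avoid, mem_erase]
  constructor
  · rintro ⟨d, hd, hdb, rfl⟩
    have hne : d ≠ b := by rintro rfl; exact hdb le_rfl
    have hdisj : Disjoint d b := P.disjoint hd hb hne
    rw [hdisj.sdiff_eq_left]
    exact ⟨hne, hd⟩
  · rintro ⟨hne, hc⟩
    have hdisj : Disjoint c b := P.disjoint hc hb hne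
    exact ⟨c, hc, fun h => P.ne_bot hc (hdisj.eq_bot_of_le h), hdisj.sdiff_eq_left⟩

variable {α : Type*} [DecidableEq α]

def singletonFree (s : Finset α) : Finset (Finpartition s) := {P | ∀ t ∈ P.parts, #t ≠ 1}

theorem card_singletonFree_empty : #(singletonFree (∅ : Finset α)) = 1 := by
  rw [card_eq_one]
  refine ⟨Finpartition.empty (Finset α), eq_singleton_iff_unique_mem.2 ⟨?_, fun P _ => ?_⟩⟩
  · simp [singletonFree]
  · ext t
    simp [parts_eq_empty_iff.2 (bot_eq_empty (α := α))]

theorem card_singletonFree_filter_part_eq {s b : Finset α} {a : α} (hab : a ∈ b) (hbs : b ⊆ s)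
    (hb : #b ≠ 1) : #{P ∈ singletonFree s | P.part a = b} = #(singletonFree (s \ b)) := by
  have hb0 : b ≠ ⊥ := ne_empty_of_mem hab
  have hdisj : Disjoint (s \ b) b := sdiff_disjoint
  have hsup : s \ b ⊔ b = s := sdiff_union_of_subset hbs
  have hmem : ∀ P ∈ {P ∈ singletonFree s | P.part a = b}, b ∈ P.parts := fun P hP =>
    (mem_filter.1 hP).2 ▸ P.part_mem.2 (hbs hab)
  refine card_bij' (fun P _ => P.avoid b) (fun Q _ => Q.extend hb0 hdisj hsup) ?_ ?_ ?_ ?_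
  · intro P hP
    have hsf := (mem_filter.1 hP).1
    simp only [singletonFree, mem_filter, mem_univ, true_and, avoid_parts_of_mem P (hmem P hP)]
      at hsf ⊢
    exact fun t ht => hsf t (mem_of_mem_erase ht)
  · intro Q hQ
    simp only [singletonFree, mem_filter, mem_univ, true_and, extend_parts, forall_mem_insert]
      at hQ ⊢
    exact ⟨⟨hb, hQ⟩, part_eq_of_mem _ (mem_insert_self _ _) hab⟩
  · intro P hP
    ext1
    rw [extend_parts, avoid_parts_of_mem P (hmem P hP), insert_erase (hmem P hP)]
  · intro Q _
    ext1
    rw [avoid_parts_of_mem _ (by simp), extend_parts, erase_insert]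
    exact fun h => hb0 (hdisj.symm.eq_bot_of_le (Q.le h))

/-- `t` is what remains of `s` once the block of `a` is removed; that block has at least two
elements exactly when `t ≠ s`. -/
theorem card_singletonFree_insert {s : Finset α} {a : α} (ha : a ∉ s) :
    #(singletonFree (insert a s)) = ∑ t ∈ s.ssubsets, #(singletonFree t) := by
  have hmaps : Set.MapsTo (fun P : Finpartition (insert a s) => insert a s \ P.part a)
      (singletonFree (insert a s)) s.ssubsets := by
    intro P hP
    have haP : a ∈ P.part a := P.mem_part_self.2 (mem_insert_self a s)
    have hsub : insert a s \ P.part a ⊆ s := fun x hx => by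
      obtain ⟨hxu, hxP⟩ := mem_sdiff.1 hx
      exact (mem_insert.1 hxu).resolve_left fun h => hxP (h ▸ haP)
    refine mem_ssubsets.2 (hsub.ssubset_of_ne fun heq => ?_)
    have hPa : P.part a = {a} := eq_singleton_iff_unique_mem.2 ⟨haP, fun x hx => by
      by_contra hxa
      have hxs : x ∈ s := (mem_insert.1 (P.part_subset a hx)).resolve_left hxa
      exact (mem_sdiff.1 (by rw [heq]; exact hxs : x ∈ insert a s \ P.part a)).2 hx⟩
    exact (mem_filter.1 hP).2 _ (P.part_mem.2 (mem_insert_self a s)) (hPa ▸ card_singleton a)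
  rw [card_eq_sum_card_fiberwise hmaps]
  refine sum_congr rfl fun t ht => ?_
  have hts := mem_ssubsets.1 ht
  have htu : t ⊆ insert a s := hts.subset.trans (subset_insert a s)
  have hfiber : {P ∈ singletonFree (insert a s) | insert a s \ P.part a = t} =
      {P ∈ singletonFree (insert a s) | P.part a = insert a s \ t} := by
    refine filter_congr fun P _ => ⟨fun h => ?_, fun h => ?_⟩
    · rw [← h, Finset.sdiff_sdiff_eq_self (P.part_subset a)]
    · rw [h, Finset.sdiff_sdiff_eq_self htu]
  have hat : a ∉ t := fun h => ha (hts.subset h)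
  obtain ⟨x, hxs, hxt⟩ := exists_of_ssubset hts
  have hcard : 1 < #(insert a s \ t) := one_lt_card.2
    ⟨a, by simp [hat], x, by simp [hxs, hxt], fun h => ha (h ▸ hxs)⟩
  rw [hfiber, card_singletonFree_filter_part_eq (by simp [hat]) sdiff_subset hcard.ne',
    Finset.sdiff_sdiff_eq_self htu]

theorem card_singletonFree_eq_dobinskiSum (s : Finset α) :
    (#(singletonFree s) : ℝ) = (exp 1)⁻¹ * dobinskiSum 1 #s := by
  induction s using Finset.strongInduction with
  | H s ih =>
  rcases s.eq_empty_or_nonempty with rfl | ⟨a, ha⟩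
  · rw [card_singletonFree_empty, card_empty, dobinskiSum_zero, Nat.cast_one,
      inv_mul_cancel₀ (exp_ne_zero 1)]
  · have has := notMem_erase a s
    rw [← insert_erase ha, card_singletonFree_insert has, card_insert_of_notMem has, Nat.cast_sum,
      sum_congr rfl fun t ht => ih t ((mem_ssubsets.1 ht).trans (erase_ssubset ha)), ← mul_sum,
      ssubsets, sum_erase_eq_sub (mem_powerset_self _), sum_powerset_apply_card]
    simp only [nsmul_eq_mul]
    rw [← dobinskiSum_succ_add]
    ring

end Finpartition

theorem btilde_eq_dobinskiSum (m : ℕ) : (Btilde m : ℝ) = (exp 1)⁻¹ * dobinskiSum 1 m := by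
  rw [Btilde, Nat.card_eq_fintype_card, Fintype.card_subtype]
  simpa [Finpartition.singletonFree] using
    Finpartition.card_singletonFree_eq_dobinskiSum (univ : Finset (Fin m))

theorem sum_choose_mul_dobinskiSum (c : ℝ) (a b : ℕ) :
    ∑ j ∈ range (b + 1), b.choose j * dobinskiSum c (a + b - j) =
      ∑' i : ℕ, ((i : ℝ) - c) ^ a * ((i : ℝ) - c + 1) ^ b / i ! := by
  calc ∑ j ∈ range (b + 1), b.choose j * dobinskiSum c (a + b - j)
      = ∑' i : ℕ, ∑ j ∈ range (b + 1), b.choose j * (((i : ℝ) - c) ^ (a + b - j) / i !) := by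
        rw [Summable.tsum_finsetSum fun j _ => (summable_pow_sub_div_factorial c _).mul_left _]
        exact sum_congr rfl fun j _ => tsum_mul_left.symm
    _ = ∑' i : ℕ, ((i : ℝ) - c) ^ a * ((i : ℝ) - c + 1) ^ b / i ! := by
        refine tsum_congr fun i => ?_
        rw [add_comm _ (1 : ℝ), add_pow, mul_sum, sum_div]
        refine sum_congr rfl fun j hj => ?_
        rw [one_pow, Nat.add_sub_assoc (le_of_lt_succ (mem_range.1 hj)), pow_add]
        ring

/-- Binomial transform of singleton-free Bell numbers as an infinite series. -/
theorem btilde_binomial_series (a b : ℕ) :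
    ((∑ j ∈ Finset.range (b + 1), b.choose j * Btilde (a + b - j) : ℕ) : ℝ) =
      (Real.exp 1)⁻¹ * ∑' i : ℕ, ((i : ℝ) - 1) ^ a * (i : ℝ) ^ b / (Nat.factorial i) := by
  have hsum := sum_choose_mul_dobinskiSum 1 a b
  simp only [sub_add_cancel] at hsum
  rw [← hsum, mul_sum]
  push_cast
  exact sum_congr rfl fun j _ => by rw [btilde_eq_dobinskiSum]; ring
end

section
/- Fix integers t ≥ 2 and ℓ ≥ t with ℓ ≡ t (mod 2). Then γ_n(ℓ) → ∞ as n → ∞, where γ_n(ℓ) = (Σ_{i=0}^{n−ℓ+1} C(n−ℓ+1, i) · B̃(n − (ℓ+t)/2 + 1 − i)) / (Σ_{i=0}^{n−ℓ} C(n−ℓ, i) · B̃(n − (ℓ+t)/2 − i)). -/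
open Finset

/-! With `c = l - (l + t) / 2` and `m = n - l`, reversing the order of summation writes `γ_n` as
`T (m + 1) / T m`, where `T m = ∑ C(m, i) g i` is the binomial transform of `g j = B̃ (j + c)`;
Pascal's rule gives `T (m + 1) = T m + T' m` with `T'` the transform of `j ↦ g (j + 1)`.

Adding a new element to one block of a singleton-free partition with at least `K` blocks gives
`K B̃ r ≤ B̃ (r + 1) + K ^ (r + 1)`, the error term bounding the partitions with fewer than `K`
blocks. Summed against binomial coefficients this becomes
`K T m ≤ T' m + K ^ (c + 1) (K + 1) ^ m`, and the error is eventually below `B̃ (m + c) ≤ T m`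
because `B̃` grows like a factorial: pairing a new element with one of the old ones gives
`(r + 1) B̃ r ≤ B̃ (r + 2)`. So `T (m + 1) ≥ K T m` for large `m`. -/

open Filter
open scoped Nat

namespace Finpartition

variable {α β γ : Type*} [Fintype α] [DecidableEq α] [DecidableEq β] [DecidableEq γ]

def ofKer (f : α → β) : Finpartition (univ : Finset α) :=
  @ofSetoid _ _ _ (Setoid.ker f) fun a b => decEq (f a) (f b)

lemma mem_part_ofKer {f : α → β} {a b : α} : b ∈ (ofKer f).part a ↔ f a = f b :=
  mem_part_ofSetoid_iff_rel

lemma part_eq_part_iff (P : Finpartition (univ : Finset α)) {a b : α} :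
    P.part a = P.part b ↔ b ∈ P.part a := by
  rw [P.mem_part_iff_part_eq_part (mem_univ b) (mem_univ a), eq_comm]

lemma eq_of_part_eq {P Q : Finpartition (univ : Finset α)} (h : ∀ a, P.part a = Q.part a) :
    P = Q := by
  have parts_eq (R : Finpartition (univ : Finset α)) : R.parts = univ.image R.part := by
    ext s
    refine ⟨fun hs => ?_, fun hs => ?_⟩
    · obtain ⟨a, -, ha⟩ := R.part_surjOn hs
      exact mem_image.2 ⟨a, mem_univ a, ha⟩
    · obtain ⟨a, -, rfl⟩ := mem_image.1 hs
      exact R.part_mem.2 (mem_univ a)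
  ext1
  rw [parts_eq, parts_eq, image_congr fun a _ => h a]

lemma ofKer_eq_ofKer_iff {f : α → β} {g : α → γ} :
    ofKer f = ofKer g ↔ ∀ a b, f a = f b ↔ g a = g b := by
  refine ⟨fun h a b => ?_, fun h => eq_of_part_eq fun a => ?_⟩
  · rw [← mem_part_ofKer, h, mem_part_ofKer]
  · ext b
    rw [mem_part_ofKer, mem_part_ofKer, h]

lemma ofKer_part (P : Finpartition (univ : Finset α)) : ofKer P.part = P :=
  eq_of_part_eq fun a => by ext b; rw [mem_part_ofKer, part_eq_part_iff]

lemma forall_card_ne_one_iff (P : Finpartition (univ : Finset α)) :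
    (∀ s ∈ P.parts, #s ≠ 1) ↔ ∀ a, ∃ b ≠ a, b ∈ P.part a := by
  constructor
  · intro h a
    have ha : a ∈ P.part a := P.mem_part_self.2 (mem_univ a)
    have hcard : 1 < #(P.part a) :=
      lt_of_le_of_ne (card_pos.2 ⟨a, ha⟩) (h _ (P.part_mem.2 (mem_univ a))).symm
    obtain ⟨b, hb, hba⟩ := exists_mem_ne hcard a
    exact ⟨b, hba, hb⟩
  · intro h s hs
    obtain ⟨a, ha⟩ := P.nonempty_of_mem_parts hs
    obtain ⟨b, hba, hb⟩ := h a
    rw [P.part_eq_of_mem hs ha] at hb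
    exact (one_lt_card.2 ⟨a, ha, b, hb, hba.symm⟩).ne'

lemma card_filter_card_parts_lt_le (K : ℕ) :
    #{P : Finpartition (univ : Finset α) | #P.parts < K} ≤ K ^ Fintype.card α := by
  have hsurj : Set.SurjOn (fun f : α → Fin K => ofKer f) (univ : Finset (α → Fin K))
      ({P : Finpartition (univ : Finset α) | #P.parts < K} : Finset _) := by
    intro P hP
    have hK : Fintype.card P.parts ≤ Fintype.card (Fin K) := by
      simpa using (mem_filter.1 hP).2.le
    obtain ⟨e⟩ := Function.Embedding.nonempty_of_card_le hK
    refine ⟨fun a => e ⟨P.part a, P.part_mem.2 (mem_univ a)⟩, mem_coe.2 (mem_univ _), ?_⟩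
    refine (ofKer_eq_ofKer_iff.2 fun a b => ?_).trans P.ofKer_part
    rw [e.injective.eq_iff, Subtype.mk.injEq]
  simpa using card_le_card_of_surjOn _ hsurj

end Finpartition

open Finpartition

def singletonFreePartitions (m : ℕ) : Finset (SetPartition m) :=
  {P | ∀ s ∈ P.parts, #s ≠ 1}

lemma Btilde_eq_card (m : ℕ) : Btilde m = #(singletonFreePartitions m) := by
  rw [Btilde, Nat.card_eq_fintype_card, Fintype.card_subtype, singletonFreePartitions]

lemma mem_singletonFreePartitions {m : ℕ} {P : SetPartition m} :
    P ∈ singletonFreePartitions m ↔ ∀ a, ∃ b ≠ a, b ∈ P.part a := by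
  rw [singletonFreePartitions, mem_filter, forall_card_ne_one_iff, and_iff_right (mem_univ P)]

lemma ofKer_mem_singletonFreePartitions {m : ℕ} {β : Type*} [DecidableEq β] {f : Fin m → β}
    (h : ∀ a, ∃ b ≠ a, f a = f b) : ofKer f ∈ singletonFreePartitions m :=
  mem_singletonFreePartitions.2 fun a => by simpa only [mem_part_ofKer] using h a

lemma one_le_Btilde {m : ℕ} (hm : m ≠ 1) : 1 ≤ Btilde m := by
  rw [Btilde_eq_card, Nat.one_le_iff_ne_zero, Ne, card_eq_zero, ← Ne, ← nonempty_iff_ne_empty]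
  refine ⟨ofKer fun _ : Fin m => (), ofKer_mem_singletonFreePartitions fun a => ?_⟩
  have : Nontrivial (Fin m) := Fin.nontrivial_iff_two_le.2 (by have := a.pos; omega)
  obtain ⟨b, hb⟩ := exists_ne a
  exact ⟨b, hb, rfl⟩

lemma sum_card_parts_le_Btilde (r : ℕ) :
    ∑ P ∈ singletonFreePartitions r, #P.parts ≤ Btilde (r + 1) := by
  rw [Btilde_eq_card, ← card_sigma]
  refine card_le_card_of_injOn
    (fun x => ofKer (Fin.snoc (α := fun _ => Finset (Fin r)) x.1.part x.2)) ?_ ?_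
  · rintro ⟨P, s⟩ hPs
    obtain ⟨hP, hs⟩ := mem_sigma.1 hPs
    refine ofKer_mem_singletonFreePartitions fun a => ?_
    induction a using Fin.lastCases with
    | last =>
      obtain ⟨x, hx⟩ := P.nonempty_of_mem_parts hs
      exact ⟨x.castSucc, (Fin.castSucc_lt_last x).ne, by simp [P.part_eq_of_mem hs hx]⟩
    | cast z =>
      obtain ⟨w, hwz, hw⟩ := mem_singletonFreePartitions.1 hP z
      exact ⟨w.castSucc, by simpa using hwz, by simpa using (part_eq_part_iff P).2 hw⟩
  · rintro ⟨P, s⟩ hPs ⟨Q, u⟩ - heq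
    obtain ⟨-, hs⟩ := mem_sigma.1 hPs
    have hker := ofKer_eq_ofKer_iff.1 heq
    obtain rfl : P = Q := by
      rw [← P.ofKer_part, ← Q.ofKer_part]
      exact ofKer_eq_ofKer_iff.2 fun a b => by simpa using hker a.castSucc b.castSucc
    obtain ⟨x, hx⟩ := P.nonempty_of_mem_parts hs
    have hu := (hker (Fin.last r) x.castSucc).1 (by simp [P.part_eq_of_mem hs hx])
    simp only [Fin.snoc_last, Fin.snoc_castSucc] at hu
    rw [hu, P.part_eq_of_mem hs hx]

lemma mul_Btilde_le (K r : ℕ) : K * Btilde r ≤ Btilde (r + 1) + K ^ (r + 1) := by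
  set F := singletonFreePartitions r
  have hfew : #{P ∈ F | #P.parts < K} ≤ K ^ r := by
    refine (card_le_card (filter_subset_filter _ (subset_univ F))).trans ?_
    simpa using card_filter_card_parts_lt_le (α := Fin r) K
  calc K * Btilde r = ∑ P ∈ F, K := by rw [Btilde_eq_card, sum_const, smul_eq_mul, mul_comm]
    _ ≤ ∑ P ∈ F, (#P.parts + if #P.parts < K then K else 0) :=
      sum_le_sum fun P _ => by split_ifs <;> omega
    _ = ∑ P ∈ F, #P.parts + K * #{P ∈ F | #P.parts < K} := by
      rw [sum_add_distrib, sum_ite, sum_const_zero, add_zero, sum_const, smul_eq_mul, mul_comm]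
    _ ≤ Btilde (r + 1) + K * K ^ r :=
      add_le_add (sum_card_parts_le_Btilde r) (Nat.mul_le_mul_left K hfew)
    _ = Btilde (r + 1) + K ^ (r + 1) := by ring

lemma succ_mul_Btilde_le (k : ℕ) : (k + 1) * Btilde k ≤ Btilde (k + 2) := by
  -- the last element and `j` form a block; `j.succAbove` carries the blocks of `P` to the rest
  let pairUp (x : Fin (k + 1) × SetPartition k) : Fin (k + 2) → Option (Finset (Fin k)) :=
    Fin.snoc (α := fun _ => Option (Finset (Fin k)))
      (x.1.insertNth (α := fun _ => Option (Finset (Fin k))) none fun z => some (x.2.part z)) none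
  rw [Btilde_eq_card, Btilde_eq_card, ← Fintype.card_fin (k + 1), ← card_univ, ← card_product]
  refine card_le_card_of_injOn (fun x => ofKer (pairUp x)) ?_ ?_
  · rintro ⟨j, P⟩ hjP
    have hP := (mem_product.1 hjP).2
    refine ofKer_mem_singletonFreePartitions fun a => ?_
    induction a using Fin.lastCases with
    | last => exact ⟨j.castSucc, (Fin.castSucc_lt_last j).ne, by simp [pairUp]⟩
    | cast y =>
      rcases j.eq_self_or_eq_succAbove y with rfl | ⟨z, rfl⟩
      · exact ⟨Fin.last _, (Fin.castSucc_lt_last _).ne', by simp [pairUp]⟩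
      · obtain ⟨w, hwz, hw⟩ := mem_singletonFreePartitions.1 hP z
        exact ⟨(j.succAbove w).castSucc, by simpa using hwz,
          by simpa [pairUp] using (part_eq_part_iff P).2 hw⟩
  · rintro ⟨j, P⟩ - ⟨j', Q⟩ - heq
    have hker := ofKer_eq_ofKer_iff.1 heq
    obtain rfl : j = j' := by
      have h := (hker (Fin.last _) j.castSucc).1 (by simp [pairUp])
      rcases j'.eq_self_or_eq_succAbove j with rfl | ⟨z, rfl⟩
      · rfl
      · simp [pairUp] at h
    obtain rfl : P = Q := by
      rw [← P.ofKer_part, ← Q.ofKer_part]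
      exact ofKer_eq_ofKer_iff.2 fun a b => by
        simpa [pairUp] using hker (j.succAbove a).castSucc (j.succAbove b).castSucc
    rfl

lemma factorial_le_Btilde : ∀ r : ℕ, (r / 2)! ≤ Btilde (r + 2)
  | 0 => one_le_Btilde (by norm_num)
  | 1 => one_le_Btilde (by norm_num)
  | r + 2 =>
    calc ((r + 2) / 2)! = (r / 2 + 1) * (r / 2)! := by
          rw [show (r + 2) / 2 = r / 2 + 1 by omega, Nat.factorial_succ]
      _ ≤ (r + 2 + 1) * Btilde (r + 2) := Nat.mul_le_mul (by omega) (factorial_le_Btilde r)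
      _ ≤ Btilde (r + 2 + 2) := succ_mul_Btilde_le (r + 2)

lemma eventually_mul_pow_le_Btilde (a b : ℕ) : ∀ᶠ q in atTop, a * b ^ q ≤ Btilde q := by
  have hhalf : Tendsto (fun q : ℕ => (q - 2) / 2) atTop atTop :=
    (Nat.tendsto_div_const_atTop two_ne_zero).comp (tendsto_sub_atTop_nat 2)
  filter_upwards [hhalf.eventually
      (Nat.eventually_mul_pow_lt_factorial_sub (a * (b + 1) ^ 3) ((b + 1) ^ 2) 0),
    eventually_ge_atTop 2] with q hq hq2
  obtain ⟨r, rfl⟩ : ∃ r, q = r + 2 := ⟨q - 2, by omega⟩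
  simp only [Nat.add_sub_cancel, Nat.sub_zero] at hq
  calc a * b ^ (r + 2) ≤ a * (b + 1) ^ (2 * (r / 2) + 3) :=
        Nat.mul_le_mul_left a (pow_le_pow b.le_succ (Nat.le_add_left 1 b) (by omega))
    _ = a * (b + 1) ^ 3 * ((b + 1) ^ 2) ^ (r / 2) := by rw [pow_add, pow_mul]; ring
    _ ≤ (r / 2)! := hq.le
    _ ≤ Btilde (r + 2) := factorial_le_Btilde r

lemma tendsto_natCast_div_atTop_of_eventually_mul_le {ι 𝕜 : Type*} [Field 𝕜] [LinearOrder 𝕜]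
    [IsStrictOrderedRing 𝕜] [Archimedean 𝕜] {l : Filter ι} {u v : ι → ℕ}
    (hv : ∀ᶠ i in l, 0 < v i) (h : ∀ K : ℕ, ∀ᶠ i in l, K * v i ≤ u i) :
    Tendsto (fun i => (u i : 𝕜) / v i) l atTop := by
  refine tendsto_atTop.2 fun b => ?_
  obtain ⟨K, hK⟩ := exists_nat_ge b
  filter_upwards [hv, h K] with i hvi hKi
  rw [le_div_iff₀ (by exact_mod_cast hvi)]
  calc b * v i ≤ K * v i := mul_le_mul_of_nonneg_right hK (Nat.cast_nonneg _)
    _ ≤ u i := mod_cast hKi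

def binomialTransform (g : ℕ → ℕ) (m : ℕ) : ℕ :=
  ∑ i ∈ range (m + 1), m.choose i * g i

section BinomialTransform

variable (g : ℕ → ℕ)

lemma binomialTransform_succ (m : ℕ) : binomialTransform g (m + 1) =
    binomialTransform g m + binomialTransform (fun i => g (i + 1)) m := by
  simp only [binomialTransform, sum_range_succ' _ (m + 1), Nat.choose_succ_succ', add_mul,
    sum_add_distrib]
  rw [sum_range_succ (fun i => m.choose (i + 1) * g (i + 1)) m,
    sum_range_succ' (fun i => m.choose i * g i) m]
  simp only [Nat.choose_succ_self, Nat.choose_zero_right]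
  ring

lemma le_binomialTransform (m : ℕ) : g m ≤ binomialTransform g m := by
  have := single_le_sum (f := fun i => m.choose i * g i) (fun _ _ => Nat.zero_le _)
    (self_mem_range_succ m)
  simpa [binomialTransform] using this

lemma binomialTransform_eq_sum_choose_mul_sub (m : ℕ) :
    binomialTransform g m = ∑ i ∈ range (m + 1), m.choose i * g (m - i) := by
  rw [binomialTransform, ← sum_range_reflect]
  refine sum_congr rfl fun i hi => ?_
  have hi : i ≤ m := Nat.lt_succ_iff.1 (mem_range.1 hi)
  rw [Nat.add_sub_cancel, Nat.choose_symm hi]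

lemma mul_binomialTransform_le {K A : ℕ} (hg : ∀ j, K * g j ≤ g (j + 1) + A * K ^ j) (m : ℕ) :
    K * binomialTransform g m ≤ binomialTransform (fun i => g (i + 1)) m + A * (K + 1) ^ m := by
  calc K * binomialTransform g m
      ≤ ∑ i ∈ range (m + 1), m.choose i * (g (i + 1) + A * K ^ i) := by
        rw [binomialTransform, mul_sum]
        exact sum_le_sum fun i _ => by
          rw [mul_left_comm]; exact Nat.mul_le_mul_left _ (hg i)
    _ = binomialTransform (fun i => g (i + 1)) m + A * (K + 1) ^ m := by
        rw [add_pow, mul_sum, binomialTransform, ← sum_add_distrib]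
        refine sum_congr rfl fun i _ => ?_
        rw [one_pow, mul_one, Nat.cast_id]
        ring

end BinomialTransform

lemma tendsto_binomialTransform_succ_div {𝕜 : Type*} [Field 𝕜] [LinearOrder 𝕜]
    [IsStrictOrderedRing 𝕜] [Archimedean 𝕜] {g : ℕ → ℕ}
    (hg : ∀ K, ∃ A, ∀ j, K * g j ≤ g (j + 1) + A * K ^ j)
    (hgrowth : ∀ a b, ∀ᶠ j in atTop, a * b ^ j ≤ g j) :
    Tendsto (fun m => (binomialTransform g (m + 1) : 𝕜) / binomialTransform g m) atTop atTop := by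
  refine tendsto_natCast_div_atTop_of_eventually_mul_le ?_ fun K => ?_
  · filter_upwards [hgrowth 1 1] with m hm
    exact (by simpa using hm.trans (le_binomialTransform g m) : 1 ≤ _)
  · obtain ⟨A, hA⟩ := hg K
    filter_upwards [hgrowth A (K + 1)] with m hm
    calc K * binomialTransform g m
        ≤ binomialTransform (fun i => g (i + 1)) m + A * (K + 1) ^ m :=
          mul_binomialTransform_le g hA m
      _ ≤ binomialTransform (fun i => g (i + 1)) m + binomialTransform g m :=
          Nat.add_le_add_left (hm.trans (le_binomialTransform g m)) _
      _ = binomialTransform g (m + 1) := by rw [binomialTransform_succ, add_comm]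

lemma tendsto_binomialTransform_Btilde_succ_div (c : ℕ) :
    Tendsto (fun m => (binomialTransform (fun j => Btilde (j + c)) (m + 1) : ℚ) /
      binomialTransform (fun j => Btilde (j + c)) m) atTop atTop := by
  refine tendsto_binomialTransform_succ_div (fun K => ⟨K ^ (c + 1), fun j => ?_⟩) fun a b => ?_
  · calc K * Btilde (j + c) ≤ Btilde (j + c + 1) + K ^ (j + c + 1) := mul_Btilde_le K (j + c)
      _ = Btilde (j + 1 + c) + K ^ (c + 1) * K ^ j := by rw [← pow_add]; ring_nf
  · filter_upwards [(tendsto_add_atTop_nat c).eventually (eventually_mul_pow_le_Btilde a (b + 1))]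
      with j hj
    calc a * b ^ j ≤ a * (b + 1) ^ (j + c) :=
          Nat.mul_le_mul_left a (pow_le_pow b.le_succ (Nat.le_add_left 1 b) (by omega))
      _ ≤ Btilde (j + c) := hj

theorem gamma_tendsto_atTop_general (t l : ℕ) (hl : t ≤ l) :
    Filter.Tendsto (fun n => gammaQ n t l) Filter.atTop Filter.atTop := by
  refine ((tendsto_binomialTransform_Btilde_succ_div (l - (l + t) / 2)).comp
    (tendsto_sub_atTop_nat l)).congr' ?_
  filter_upwards [eventually_ge_atTop l] with n hn
  simp only [Function.comp_apply, gammaQ, binomialTransform_eq_sum_choose_mul_sub]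
  congr 2 <;> refine sum_congr rfl fun i hi => ?_ <;> rw [mem_range] at hi <;> congr 2 <;> omega

/-- For fixed t and ℓ (of the same parity), γ_n(ℓ) → ∞ as n → ∞. -/
theorem gamma_tendsto_atTop (t l : ℕ) (ht : 2 ≤ t) (hl : t ≤ l) (hmod : l % 2 = t % 2) :
    Filter.Tendsto (fun n => gammaQ n t l) Filter.atTop Filter.atTop :=
  gamma_tendsto_atTop_general t l hl
end
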